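/- arXiv:2004.09784 — 9 statements merged into one kernel-verified Lean document; each statement's English description precedes it below -/
import Mathlib

section
/- Let M be a finite set of items, v : Finset M → ℝ a normalized, monotone, subadditive valuation, U ⊆ M, γ ≥ 0, and λ a distribution over subsets of U. Suppose that for every distribution μ over subsets of U satisfying Σ_{T⊆U : j∈T} μ_T ≤ Σ_{S⊆U : j∈S} λ_S for all j ∈ U, one has Σ_{S,T⊆U} λ_S μ_T v(S∖T) ≥ γ · v(U). Then there exist nonnegative prices p_j ≥ 0 for j ∈ U such that for every T ⊆ U: Σ_{j∈T} p_j + Σ_{S⊆U} λ_S · (v(S∖T) − Σ_{j∈S} p_j) ≥ γ · v(U). -/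
open Finset

private lemma aux_le_of_forall_pos {c d e : ℝ} (h : ∀ δ : ℝ, 0 < δ → c + δ * d < e) : c ≤ e := by
  by_contra hc
  push_neg at hc
  set δ : ℝ := (c - e) / (2 * (|d| + 1)) with hδdef
  have hδ : 0 < δ := by
    apply div_pos (by linarith) (by positivity)
  have h1 := h δ hδ
  have h2 : δ * (|d| + 1) = (c - e) / 2 := by
    rw [hδdef]; field_simp
  nlinarith [neg_abs_le d, abs_nonneg d, hδ.le]

private lemma aux_nonpos {c d : ℝ} (h : ∀ t : ℝ, 0 < t → t * d < c) : d ≤ 0 := by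
  by_contra hd
  push_neg at hd
  have ht : (0:ℝ) < max 1 (c / d) := lt_of_lt_of_le one_pos (le_max_left _ _)
  have h1 := h _ ht
  have h2 : c / d ≤ max 1 (c / d) := le_max_right _ _
  rw [div_le_iff₀ hd] at h2
  nlinarith

private lemma aux_combo {a b c₁ c₂ d₁ d₂ : ℝ} (ha : 0 ≤ a) (hb : 0 ≤ b) (hab : a + b = 1)
    (h₁ : c₁ < d₁) (h₂ : c₂ < d₂) : a * c₁ + b * c₂ < a * d₁ + b * d₂ := by
  rcases eq_or_lt_of_le ha with h | h
  · have hb1 : b = 1 := by linarith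
    rw [← h, hb1]; simpa using h₂
  · have := mul_le_mul_of_nonneg_left h₂.le hb
    nlinarith

/-- **From the zero-sum game condition to prices (LP duality step).**
If a distribution `lam` over subsets of `U` is such that every distribution
`mu` over subsets of `U` whose per-item marginals are dominated by those of
`lam` satisfies `Σ_{S,T} lam S · mu T · v (S \ T) ≥ γ · v U`, then there
exist nonnegative item prices `p j` for `j ∈ U` such that for all `T ⊆ U`:
`Σ_{j∈T} p j + Σ_{S⊆U} lam S (v (S \ T) - Σ_{j∈S} p j) ≥ γ · v U`. -/
theorem stmt_1 {M : Type*} [Fintype M] [DecidableEq M]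
    (v : Finset M → ℝ)
    (hnorm : v ∅ = 0)
    (hmono : ∀ S T : Finset M, S ⊆ T → v S ≤ v T)
    (hsub : ∀ S T : Finset M, v (S ∪ T) ≤ v S + v T)
    (U : Finset M) (γ : ℝ) (hγ : 0 ≤ γ)
    (lam : Finset M → ℝ)
    (hlam0 : ∀ S : Finset M, 0 ≤ lam S)
    (hlam1 : ∑ S ∈ U.powerset, lam S = 1)
    (hgame : ∀ mu : Finset M → ℝ,
      (∀ T : Finset M, 0 ≤ mu T) →
      (∑ T ∈ U.powerset, mu T = 1) →
      (∀ j ∈ U,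
        ∑ T ∈ U.powerset.filter (fun T => j ∈ T), mu T ≤
          ∑ S ∈ U.powerset.filter (fun S => j ∈ S), lam S) →
      ∑ S ∈ U.powerset, ∑ T ∈ U.powerset, lam S * mu T * v (S \ T) ≥ γ * v U) :
    ∃ p : M → ℝ,
      (∀ j ∈ U, 0 ≤ p j) ∧
      (∀ T ⊆ U,
        (∑ j ∈ T, p j) +
            ∑ S ∈ U.powerset, lam S * (v (S \ T) - ∑ j ∈ S, p j) ≥ γ * v U) := by
  classical
  -- basic abbreviations
  set γ₀ : ℝ := γ * v U with hγ₀def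
  set x : M → ℝ := fun j => ∑ S ∈ U.powerset.filter (fun S => j ∈ S), lam S with hxdef
  set U' : Finset M := U.filter (fun j => 0 < x j) with hU'def
  set fv : Finset M → ℝ := fun T => ∑ S ∈ U.powerset, lam S * v (S \ T) with hfvdef
  set marg : (Finset M → ℝ) → M → ℝ :=
    fun μ j => ∑ T ∈ U.powerset.filter (fun T => j ∈ T), μ T with hmargdef
  have hU'U : U' ⊆ U := filter_subset _ _
  have hv0 : ∀ S : Finset M, 0 ≤ v S := fun S => hnorm ▸ hmono ∅ S (empty_subset S)
  have hx0 : ∀ j, 0 ≤ x j := fun j => Finset.sum_nonneg fun S _ => hlam0 S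
  have hxzero : ∀ j ∈ U, j ∉ U' → x j = 0 := by
    intro j hj hj'
    have : ¬ 0 < x j := fun h => hj' (mem_filter.mpr ⟨hj, h⟩)
    linarith [hx0 j, not_lt.mp this]
  have hlamsupp : ∀ T : Finset M, T ⊆ U → ¬ T ⊆ U' → lam T = 0 := by
    intro T hTU hT'
    obtain ⟨j, hjT, hjU'⟩ := not_subset.mp hT'
    have hxj : x j = 0 := hxzero j (hTU hjT) hjU'
    have hmem : T ∈ U.powerset.filter (fun S => j ∈ S) :=
      mem_filter.mpr ⟨mem_powerset.mpr hTU, hjT⟩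
    have hle : lam T ≤ x j := Finset.single_le_sum (f := lam) (fun S _ => hlam0 S) hmem
    linarith [hlam0 T]
  -- the predicate of admissible distributions over subsets of U'
  set Ok : (Finset M → ℝ) → Prop :=
    fun μ => (∀ T, 0 ≤ μ T) ∧ (∀ T, ¬ T ⊆ U' → μ T = 0) ∧ (∑ T ∈ U'.powerset, μ T = 1)
    with hOkdef
  -- extension of sums from powerset U' to powerset U
  have hsum_ext : ∀ (μ : Finset M → ℝ) (g : Finset M → ℝ), (∀ T, ¬ T ⊆ U' → μ T = 0) →
      ∑ T ∈ U.powerset, μ T * g T = ∑ T ∈ U'.powerset, μ T * g T := by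
    intro μ g hsupp
    refine (Finset.sum_subset (Finset.powerset_mono.mpr hU'U) ?_).symm
    intro T _ hT
    rw [hsupp T (fun h => hT (mem_powerset.mpr h)), zero_mul]
  have hsum_ext1 : ∀ (μ : Finset M → ℝ), (∀ T, ¬ T ⊆ U' → μ T = 0) →
      ∑ T ∈ U.powerset, μ T = ∑ T ∈ U'.powerset, μ T := by
    intro μ hsupp
    refine (Finset.sum_subset (Finset.powerset_mono.mpr hU'U) ?_).symm
    intro T _ hT
    exact hsupp T (fun h => hT (mem_powerset.mpr h))
  -- an admissible μ has zero marginal outside U'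
  have hmarg_out : ∀ μ : Finset M → ℝ, (∀ T, ¬ T ⊆ U' → μ T = 0) →
      ∀ j, j ∉ U' → marg μ j = 0 := by
    intro μ hsupp j hj
    refine Finset.sum_eq_zero fun T hT => ?_
    rcases mem_filter.mp hT with ⟨_, hjT⟩
    refine hsupp T fun hsub' => hj (hsub' hjT)
  -- key: any admissible μ gives a lower bound for the game (from hgame)
  have hgame' : ∀ μ : Finset M → ℝ, Ok μ → (∀ j ∈ U', marg μ j ≤ x j) →
      γ₀ ≤ ∑ T ∈ U'.powerset, μ T * fv T := by
    intro μ hOk hm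
    obtain ⟨hμ0, hsupp, hsum⟩ := hOk
    have htot : ∑ T ∈ U.powerset, μ T = 1 := by rw [hsum_ext1 μ hsupp]; exact hsum
    have hmarg : ∀ j ∈ U, marg μ j ≤ x j := by
      intro j hj
      by_cases hj' : j ∈ U'
      · exact hm j hj'
      · rw [hmarg_out μ hsupp j hj']; exact hx0 j
    have hg := hgame μ hμ0 htot hmarg
    have heq : ∑ S ∈ U.powerset, ∑ T ∈ U.powerset, lam S * μ T * v (S \ T)
        = ∑ T ∈ U'.powerset, μ T * fv T := by
      rw [← hsum_ext μ fv hsupp, Finset.sum_comm]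
      refine Finset.sum_congr rfl fun T _ => ?_
      rw [hfvdef, Finset.mul_sum]
      exact Finset.sum_congr rfl fun S _ => by ring
    rw [heq] at hg
    exact hg
  -- the open convex set for separation
  set A : Set ((M → ℝ) × ℝ) :=
    {ur | ∃ μ : Finset M → ℝ, Ok μ ∧ (∀ j ∈ U', marg μ j < x j + ur.1 j) ∧
      (∑ T ∈ U'.powerset, μ T * fv T < ur.2)} with hAdef
  have hAopen : IsOpen A := by
    rw [isOpen_iff_forall_mem_open]
    rintro ⟨u, r⟩ ⟨μ, hOk, hm, hval⟩
    refine ⟨{ur : (M → ℝ) × ℝ | (∀ j ∈ U', marg μ j < x j + ur.1 j) ∧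
      (∑ T ∈ U'.powerset, μ T * fv T < ur.2)}, ?_, ?_, ?_⟩
    · rintro ⟨u', r'⟩ ⟨h1, h2⟩
      exact ⟨μ, hOk, h1, h2⟩
    · have : {ur : (M → ℝ) × ℝ | (∀ j ∈ U', marg μ j < x j + ur.1 j) ∧
          (∑ T ∈ U'.powerset, μ T * fv T < ur.2)} =
          (⋂ j ∈ U', {ur : (M → ℝ) × ℝ | marg μ j < x j + ur.1 j}) ∩
            {ur : (M → ℝ) × ℝ | ∑ T ∈ U'.powerset, μ T * fv T < ur.2} := by
        ext ur; simp [Set.mem_iInter]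
      rw [this]
      refine IsOpen.inter (isOpen_biInter_finset fun j _ => ?_) ?_
      · exact isOpen_lt continuous_const
          (continuous_const.add ((continuous_apply j).comp continuous_fst))
      · exact isOpen_lt continuous_const continuous_snd
    · exact ⟨hm, hval⟩
  have hAconv : Convex ℝ A := by
    rintro ⟨u₁, r₁⟩ ⟨μ₁, ⟨hμ₁0, hsupp₁, hsum₁⟩, hm₁, hval₁⟩
      ⟨u₂, r₂⟩ ⟨μ₂, ⟨hμ₂0, hsupp₂, hsum₂⟩, hm₂, hval₂⟩ a b ha hb hab
    refine ⟨fun T => a * μ₁ T + b * μ₂ T, ⟨?_, ?_, ?_⟩, ?_, ?_⟩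
    · intro T
      exact add_nonneg (mul_nonneg ha (hμ₁0 T)) (mul_nonneg hb (hμ₂0 T))
    · intro T hT
      simp only [hsupp₁ T hT, hsupp₂ T hT, mul_zero, add_zero]
    · rw [Finset.sum_add_distrib, ← Finset.mul_sum, ← Finset.mul_sum, hsum₁, hsum₂]
      linarith
    · intro j hj
      have hdist : marg (fun T => a * μ₁ T + b * μ₂ T) j = a * marg μ₁ j + b * marg μ₂ j := by
        rw [hmargdef]
        simp only []
        rw [Finset.sum_add_distrib, ← Finset.mul_sum, ← Finset.mul_sum]
      rw [hdist]
      have := aux_combo ha hb hab (hm₁ j hj) (hm₂ j hj)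
      have hfst : (a • (u₁, r₁) + b • (u₂, r₂) : (M → ℝ) × ℝ).1 j = a * u₁ j + b * u₂ j := by
        simp [Prod.smul_fst, Prod.fst_add]
      rw [hfst]
      have hid : a * (x j + (u₁, r₁).1 j) + b * (x j + (u₂, r₂).1 j)
          = x j + (a * u₁ j + b * u₂ j) := by
        simp only [Prod.fst]
        linear_combination (x j) * hab
      linarith [this, hid.le]
    · have hdist : ∑ T ∈ U'.powerset, (a * μ₁ T + b * μ₂ T) * fv T
          = a * (∑ T ∈ U'.powerset, μ₁ T * fv T) + b * (∑ T ∈ U'.powerset, μ₂ T * fv T) := by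
        rw [Finset.mul_sum, Finset.mul_sum, ← Finset.sum_add_distrib]
        exact Finset.sum_congr rfl fun T _ => by ring
      rw [hdist]
      have hsnd : (a • (u₁, r₁) + b • (u₂, r₂) : (M → ℝ) × ℝ).2 = a * r₁ + b * r₂ := by
        simp [Prod.smul_snd, Prod.snd_add]
      rw [hsnd]
      exact aux_combo ha hb hab hval₁ hval₂
  have hbA : ((0 : M → ℝ), γ₀) ∉ A := by
    rintro ⟨μ, hOk, hm, hval⟩
    have := hgame' μ hOk (fun j hj => by
      have := hm j hj
      simpa using this.le)
    linarith
  obtain ⟨φ, hφ⟩ := geometric_hahn_banach_open_point hAconv hAopen hbA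
  set s' : ℝ := φ ((0 : M → ℝ), (1 : ℝ)) with hs'def
  obtain ⟨p', hp'⟩ : ∃ P : M → ℝ, ∀ j, P j = φ ((Pi.single j (1:ℝ) : M → ℝ), (0:ℝ)) :=
    ⟨fun j => φ ((Pi.single j (1:ℝ) : M → ℝ), (0:ℝ)), fun _ => rfl⟩
  have huexp : ∀ u : M → ℝ, ∑ j : M, u j • (Pi.single j (1:ℝ) : M → ℝ) = u := by
    intro u; funext k
    rw [Finset.sum_apply]
    simp [Pi.single_apply, mul_ite, Finset.sum_ite_eq]
  have hexp : ∀ (u : M → ℝ) (r : ℝ), φ (u, r) = (∑ j : M, u j * p' j) + r * s' := by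
    intro u r
    have h1 : ((u, r) : (M → ℝ) × ℝ)
        = (∑ j : M, u j • ((Pi.single j (1:ℝ) : M → ℝ), (0:ℝ))) + r • ((0 : M → ℝ), (1:ℝ)) := by
      rw [Prod.ext_iff]
      constructor
      · simp [Prod.fst_sum, huexp u]
      · simp [Prod.snd_sum]
    rw [h1, map_add, map_sum, map_smul, smul_eq_mul]
    congr 1
    refine Finset.sum_congr rfl fun j _ => ?_
    rw [map_smul, smul_eq_mul, hp' j]
  have hφb : φ ((0 : M → ℝ), γ₀) = γ₀ * s' := by
    rw [hexp]; simp
  have hAmem : ∀ μ : Finset M → ℝ, Ok μ → ∀ (u : M → ℝ) (r : ℝ),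
      (∀ j ∈ U', marg μ j < x j + u j) → (∑ T ∈ U'.powerset, μ T * fv T < r) → (u, r) ∈ A :=
    fun μ hOk u r h1 h2 => ⟨μ, hOk, h1, h2⟩
  set ind : M → ℝ := fun j => if j ∈ U' then (1:ℝ) else 0 with hInddef
  -- key inequality obtained from the separating functional, letting δ → 0
  have hkey : ∀ μ : Finset M → ℝ, Ok μ → ∀ u : M → ℝ,
      (∀ j ∈ U', marg μ j ≤ x j + u j) →
      (∑ j : M, u j * p' j) + (∑ T ∈ U'.powerset, μ T * fv T) * s' ≤ γ₀ * s' := by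
    intro μ hOk u hu
    refine aux_le_of_forall_pos (d := (∑ j : M, ind j * p' j) + s') ?_
    intro δ hδ
    have hmem : ((u + δ • ind : M → ℝ), (∑ T ∈ U'.powerset, μ T * fv T) + δ) ∈ A := by
      refine hAmem μ hOk _ _ ?_ (by linarith)
      intro j hj
      have hind1 : ind j = 1 := if_pos hj
      have h2 : (u + δ • ind) j = u j + δ := by
        simp [hind1]
      rw [h2]
      have := hu j hj
      linarith
    have hlt := hφ _ hmem
    rw [hφb] at hlt
    have heval : φ ((u + δ • ind : M → ℝ), (∑ T ∈ U'.powerset, μ T * fv T) + δ)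
        = ((∑ j : M, u j * p' j) + (∑ T ∈ U'.powerset, μ T * fv T) * s')
          + δ * ((∑ j : M, ind j * p' j) + s') := by
      rw [hexp]
      have hterm : ∑ j : M, (u + δ • ind) j * p' j
          = ∑ j : M, (u j * p' j + δ * (ind j * p' j)) := by
        refine Finset.sum_congr rfl fun j _ => ?_
        simp only [Pi.add_apply, Pi.smul_apply, smul_eq_mul]
        ring
      rw [hterm, Finset.sum_add_distrib, ← Finset.mul_sum]
      ring
    rw [heval] at hlt
    exact hlt
  -- the strictly feasible (Slater) distribution
  set lam' : Finset M → ℝ := fun T => if T ⊆ U' then lam T else 0 with hlam'def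
  have hOklam' : Ok lam' := by
    refine ⟨fun T => ?_, fun T hT => if_neg hT, ?_⟩
    · simp only [hlam'def]
      split
      · exact hlam0 T
      · exact le_refl 0
    · have h1 : ∑ T ∈ U'.powerset, lam' T = ∑ T ∈ U'.powerset, lam T :=
        Finset.sum_congr rfl fun T hT => if_pos (mem_powerset.mp hT)
      have h2 : ∑ T ∈ U.powerset, lam T = ∑ T ∈ U'.powerset, lam T := by
        refine (Finset.sum_subset (Finset.powerset_mono.mpr hU'U) ?_).symm
        intro T hT hT'
        exact hlamsupp T (mem_powerset.mp hT) (fun h => hT' (mem_powerset.mpr h))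
      rw [h1, ← h2, hlam1]
  have hmarglam' : ∀ j, marg lam' j = x j := by
    intro j
    refine Finset.sum_congr rfl fun T hT => ?_
    rcases mem_filter.mp hT with ⟨hTU, _⟩
    by_cases h : T ⊆ U'
    · exact if_pos h
    · simp only [hlam'def]
      rw [if_neg h, hlamsupp T (mem_powerset.mp hTU) h]
  set μh : Finset M → ℝ := fun T => (1/2) * lam' T + (1/2) * (if T = ∅ then 1 else 0) with hμhdef
  have hOkμh : Ok μh := by
    obtain ⟨hl0, hlsupp, hlsum⟩ := hOklam'
    refine ⟨fun T => ?_, fun T hT => ?_, ?_⟩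
    · simp only [hμhdef]
      have := hl0 T
      positivity
    · simp only [hμhdef]
      rw [hlsupp T hT, if_neg (fun h => hT (by rw [h]; exact empty_subset U'))]
      ring
    · simp only [hμhdef]
      rw [Finset.sum_add_distrib, ← Finset.mul_sum, ← Finset.mul_sum, hlsum,
        Finset.sum_ite_eq' U'.powerset ∅ (fun _ => (1:ℝ)),
        if_pos (mem_powerset.mpr (empty_subset U'))]
      norm_num
  have hmargμh : ∀ j, marg μh j = x j / 2 := by
    intro j
    have : marg μh j = (1/2) * marg lam' j
        + (1/2) * ∑ T ∈ U.powerset.filter (fun T => j ∈ T), (if T = ∅ then (1:ℝ) else 0) := by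
      simp only [hmargdef, hμhdef]
      rw [Finset.sum_add_distrib, ← Finset.mul_sum, ← Finset.mul_sum]
    rw [this, hmarglam' j, Finset.sum_ite_eq' _ ∅ (fun _ => (1:ℝ)), if_neg ?_]
    · ring
    · intro hmem
      exact (notMem_empty j) (mem_filter.mp hmem).2
  set valh : ℝ := ∑ T ∈ U'.powerset, μh T * fv T with hvalhdef
  set R : ℝ := max (valh + 1) (γ₀ + 1) with hRdef
  have hvalhR : valh < R := lt_of_lt_of_le (by linarith) (le_max_left _ _)
  have hγ₀R : γ₀ < R := lt_of_lt_of_le (by linarith) (le_max_right _ _)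
  have hs'neg : s' < 0 := by
    have hmem : ((0 : M → ℝ), R) ∈ A := by
      refine hAmem μh hOkμh _ _ ?_ hvalhR
      intro j hj
      have hxj : 0 < x j := (mem_filter.mp hj).2
      rw [hmargμh j]
      simp only [Pi.zero_apply, add_zero]
      linarith
    have hlt := hφ _ hmem
    rw [hφb] at hlt
    have hR0 : φ ((0:M→ℝ), R) = R * s' := by rw [hexp]; simp
    rw [hR0] at hlt
    nlinarith
  have hp'neg : ∀ j ∈ U', p' j ≤ 0 := by
    intro j hj
    refine aux_nonpos (c := γ₀ * s' - R * s') ?_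
    intro t ht
    have hmem : ((t • (Pi.single j 1 : M → ℝ)), R) ∈ A := by
      refine hAmem μh hOkμh _ _ ?_ hvalhR
      intro k hk
      have hxk : 0 < x k := (mem_filter.mp hk).2
      have hnn : 0 ≤ (t • (Pi.single j 1 : M → ℝ)) k := by
        by_cases h : k = j <;> simp [Pi.single_apply, h, ht.le]
      rw [hmargμh k]
      linarith
    have hlt := hφ _ hmem
    rw [hφb] at hlt
    have heval : φ ((t • (Pi.single j 1 : M → ℝ)), R) = t * p' j + R * s' := by
      rw [hexp]
      congr 1
      have hterm : ∀ k : M, (t • (Pi.single j 1 : M → ℝ)) k * p' k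
          = if k = j then t * p' k else 0 := by
        intro k
        by_cases h : k = j <;> simp [Pi.single_apply, h]
      rw [Finset.sum_congr rfl (fun k _ => hterm k), Finset.sum_ite_eq' Finset.univ j _,
        if_pos (mem_univ j)]
    rw [heval] at hlt
    linarith
  have hs'ne : s' ≠ 0 := ne_of_lt hs'neg
  set q : M → ℝ := fun j => p' j / s' with hqdef
  have hq0 : ∀ j ∈ U', 0 ≤ q j := by
    intro j hj
    have h1 := div_nonneg (neg_nonneg.mpr (hp'neg j hj)) (neg_nonneg.mpr hs'neg.le)
    rw [neg_div_neg_eq] at h1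
    exact h1
  set XQ : ℝ := ∑ j ∈ U', x j * q j with hXQdef
  -- the price inequality for subsets of U'
  have hmain : ∀ T : Finset M, T ⊆ U' → γ₀ ≤ (∑ j ∈ T, q j) + fv T - XQ := by
    intro T hT
    set μT : Finset M → ℝ := fun S => if S = T then 1 else 0 with hμTdef
    have hOkT : Ok μT := by
      refine ⟨fun S => ?_, fun S hS => ?_, ?_⟩
      · simp only [hμTdef]; split <;> norm_num
      · simp only [hμTdef]
        exact if_neg (fun h => hS (by rw [h]; exact hT))
      · simp only [hμTdef]
        rw [Finset.sum_ite_eq' U'.powerset T (fun _ => (1:ℝ)), if_pos (mem_powerset.mpr hT)]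
    set uT : M → ℝ := fun j => if j ∈ U' then ((if j ∈ T then (1:ℝ) else 0) - x j) else 0
      with huTdef
    have hmargT : ∀ j ∈ U', marg μT j ≤ x j + uT j := by
      intro j hj
      have h1 : marg μT j = if j ∈ T then 1 else 0 := by
        simp only [hmargdef, hμTdef]
        rw [Finset.sum_ite_eq' _ T (fun _ => (1:ℝ))]
        have hcond : (T ∈ (U.powerset.filter (fun T => j ∈ T))) ↔ j ∈ T := by
          simp [Finset.mem_filter, Finset.mem_powerset, hT.trans hU'U]
        exact if_congr hcond rfl rfl
      have h2 : uT j = (if j ∈ T then (1:ℝ) else 0) - x j := if_pos hj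
      rw [h1, h2]
      linarith
    have hvalT : ∑ S ∈ U'.powerset, μT S * fv S = fv T := by
      have hterm : ∀ S : Finset M, μT S * fv S = if S = T then fv S else 0 := by
        intro S
        simp only [hμTdef]
        split <;> ring
      rw [Finset.sum_congr rfl (fun S _ => hterm S), Finset.sum_ite_eq' _ T fv,
        if_pos (mem_powerset.mpr hT)]
    have hk := hkey μT hOkT uT hmargT
    rw [hvalT] at hk
    have hsum1 : ∑ j : M, uT j * p' j = (∑ j ∈ T, p' j) - ∑ j ∈ U', x j * p' j := by
      have hzero : ∀ j ∈ (Finset.univ : Finset M), j ∉ U' → uT j * p' j = 0 := by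
        intro j _ hj
        simp only [huTdef]
        rw [if_neg hj, zero_mul]
      rw [← Finset.sum_subset (Finset.subset_univ U') hzero]
      have hterm : ∀ j ∈ U', uT j * p' j = (if j ∈ T then p' j else 0) - x j * p' j := by
        intro j hj
        simp only [huTdef]
        rw [if_pos hj]
        split <;> ring
      rw [Finset.sum_congr rfl hterm, Finset.sum_sub_distrib]
      congr 1
      rw [Finset.sum_ite_mem U' T p', Finset.inter_eq_right.mpr hT]
    rw [hsum1] at hk
    have hqT : ∑ j ∈ T, q j = (∑ j ∈ T, p' j) / s' := by
      simp only [hqdef]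
      rw [Finset.sum_div]
    have hXQ' : XQ = (∑ j ∈ U', x j * p' j) / s' := by
      simp only [hXQdef, hqdef]
      rw [Finset.sum_div]
      exact Finset.sum_congr rfl fun j _ => (mul_div_assoc _ _ _).symm
    rw [hqT, hXQ']
    have hcomb : (∑ j ∈ T, p' j) / s' + fv T - (∑ j ∈ U', x j * p' j) / s'
        = ((∑ j ∈ T, p' j) - (∑ j ∈ U', x j * p' j) + fv T * s') / s' := by
      field_simp
      ring
    rw [hcomb, le_div_iff_of_neg hs'neg]
    linarith
  -- assemble the final prices
  set C : ℝ := max 0 (γ₀ + XQ) with hCdef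
  have hC0 : (0:ℝ) ≤ C := le_max_left _ _
  have hCge : γ₀ + XQ ≤ C := le_max_right _ _
  set p : M → ℝ := fun j => if j ∈ U' then q j else if j ∈ U then C else 0 with hpdef
  have hp0 : ∀ j ∈ U, 0 ≤ p j := by
    intro j hj
    simp only [hpdef]
    by_cases h : j ∈ U'
    · rw [if_pos h]; exact hq0 j h
    · rw [if_neg h, if_pos hj]; exact hC0
  refine ⟨p, hp0, ?_⟩
  intro T hTU
  have hW : ∑ S ∈ U.powerset, lam S * (∑ j ∈ S, p j) = XQ := by
    have step1 : ∀ S ∈ U.powerset, lam S * (∑ j ∈ S, p j)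
        = ∑ j ∈ U, (if j ∈ S then lam S * p j else 0) := by
      intro S hS
      rw [Finset.mul_sum, Finset.sum_ite_mem U S (fun j => lam S * p j),
        Finset.inter_eq_right.mpr (mem_powerset.mp hS)]
    rw [Finset.sum_congr rfl step1, Finset.sum_comm]
    have step2 : ∀ j ∈ U, ∑ S ∈ U.powerset, (if j ∈ S then lam S * p j else 0)
        = x j * p j := by
      intro j hj
      calc ∑ S ∈ U.powerset, (if j ∈ S then lam S * p j else 0)
          = ∑ S ∈ U.powerset, (if j ∈ S then lam S else 0) * p j := by
            refine Finset.sum_congr rfl fun S _ => ?_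
            rw [ite_mul, zero_mul]
        _ = (∑ S ∈ U.powerset, if j ∈ S then lam S else 0) * p j := (Finset.sum_mul _ _ _).symm
        _ = (∑ S ∈ U.powerset.filter (fun S => j ∈ S), lam S) * p j := by
            rw [Finset.sum_filter]
        _ = x j * p j := rfl
    rw [Finset.sum_congr rfl step2]
    have hres : ∑ j ∈ U, x j * p j = ∑ j ∈ U', x j * p j :=
      (Finset.sum_subset hU'U (fun j hj hj' => by rw [hxzero j hj hj', zero_mul])).symm
    rw [hres, hXQdef]
    refine Finset.sum_congr rfl fun j hj => ?_
    simp only [hpdef]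
    rw [if_pos hj]
  have hsplit2 : ∑ S ∈ U.powerset, lam S * (v (S \ T) - ∑ j ∈ S, p j) = fv T - XQ := by
    rw [← hW]
    have : fv T - ∑ S ∈ U.powerset, lam S * (∑ j ∈ S, p j)
        = ∑ S ∈ U.powerset, (lam S * v (S \ T) - lam S * (∑ j ∈ S, p j)) := by
      simp only [hfvdef]
      rw [Finset.sum_sub_distrib]
    rw [this]
    exact Finset.sum_congr rfl fun S _ => by ring
  rw [ge_iff_le, hsplit2]
  by_cases hTsub : T ⊆ U'
  · have hpq : ∑ j ∈ T, p j = ∑ j ∈ T, q j := by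
      refine Finset.sum_congr rfl fun j hj => ?_
      simp only [hpdef]
      rw [if_pos (hTsub hj)]
    rw [hpq]
    have := hmain T hTsub
    linarith
  · obtain ⟨j0, hj0T, hj0U'⟩ := not_subset.mp hTsub
    have hj0U : j0 ∈ U := hTU hj0T
    have hpj0 : p j0 = C := by
      simp only [hpdef]
      rw [if_neg hj0U', if_pos hj0U]
    have hsum_ge : C ≤ ∑ j ∈ T, p j := by
      rw [← hpj0]
      exact Finset.single_le_sum (fun j hj => hp0 j (hTU hj)) hj0T
    have hfv0 : 0 ≤ fv T := Finset.sum_nonneg fun S _ => mul_nonneg (hlam0 S) (hv0 _)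
    linarith
end

section
/- Let M be a finite set of m ≥ 3 items, v : Finset M → ℝ a normalized, monotone, subadditive valuation, and U ⊆ M. Set ℓ := ⌈log₂⌈log₂ m⌉⌉ and γ := (1/2 − 1/m)/(ℓ+1). Then there exist a natural number k with 0 ≤ k ≤ ℓ, so that with q := 2^{−2^k}, and a distribution λ ∈ Δ_U(q) such that for every distribution μ ∈ Δ_U(q): Σ_{S,T⊆U} λ_S μ_T v(S∖T) ≥ γ · v(U). -/
open Finset

lemma pigeon_aux (f : ℕ → ℝ) (n : ℕ) :
    ∃ k ≤ n, (f 0 - f (n+1)) / ((n : ℝ) + 1) ≤ f k - f (k+1) := by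
  by_contra h
  push_neg at h
  have hsum : f 0 - f (n+1) = ∑ k ∈ Finset.range (n+1), (f k - f (k+1)) :=
    (Finset.sum_range_sub' f (n+1)).symm
  have hlt : ∑ k ∈ Finset.range (n+1), (f k - f (k+1)) <
      ∑ _k ∈ Finset.range (n+1), (f 0 - f (n+1)) / ((n:ℝ)+1) := by
    apply Finset.sum_lt_sum_of_nonempty ⟨0, by simp⟩
    intro k hk
    exact h k (Nat.lt_succ_iff.mp (Finset.mem_range.mp hk))
  rw [Finset.sum_const, Finset.card_range, nsmul_eq_mul] at hlt
  have hne : ((n:ℝ)+1) ≠ 0 := by positivity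
  rw [← hsum] at hlt
  push_cast at hlt
  rw [mul_div_cancel₀ _ hne] at hlt
  exact lt_irrefl _ hlt

lemma subadd_singletons {M : Type*} [DecidableEq M] (v : Finset M → ℝ)
    (hnorm : v ∅ = 0) (hsub : ∀ S T : Finset M, v (S ∪ T) ≤ v S + v T) :
    ∀ S : Finset M, v S ≤ ∑ j ∈ S, v {j} := by
  intro S
  induction S using Finset.induction_on with
  | empty => simp [hnorm]
  | @insert a s hx ih =>
    rw [Finset.sum_insert hx]
    calc v (insert a s) = v ({a} ∪ s) := by rw [Finset.insert_eq]
    _ ≤ v {a} + v s := hsub _ _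
    _ ≤ v {a} + ∑ j ∈ s, v {j} := by linarith

lemma exists_max_dist {M : Type*} [Fintype M] [DecidableEq M]
    (U : Finset M) (v : Finset M → ℝ) (c : ℝ) (hc : 0 ≤ c) :
    ∃ lam : Finset M → ℝ,
      (∀ S, 0 ≤ lam S) ∧ (∀ S, ¬ S ⊆ U → lam S = 0) ∧
      (∑ S ∈ U.powerset, lam S = 1) ∧
      (∀ j ∈ U, ∑ S ∈ U.powerset.filter (fun S => j ∈ S), lam S ≤ c) ∧
      (∀ mu : Finset M → ℝ, (∀ S, 0 ≤ mu S) → (∀ S, ¬ S ⊆ U → mu S = 0) →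
        (∑ S ∈ U.powerset, mu S = 1) →
        (∀ j ∈ U, ∑ S ∈ U.powerset.filter (fun S => j ∈ S), mu S ≤ c) →
        ∑ S ∈ U.powerset, mu S * v S ≤ ∑ S ∈ U.powerset, lam S * v S) := by
  set D : Set (Finset M → ℝ) :=
    {lam | (∀ S, 0 ≤ lam S) ∧ (∀ S, ¬ S ⊆ U → lam S = 0) ∧
      (∑ S ∈ U.powerset, lam S = 1) ∧
      (∀ j ∈ U, ∑ S ∈ U.powerset.filter (fun S => j ∈ S), lam S ≤ c)} with hD
  have hclosed : IsClosed D := by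
    have h1 : IsClosed {lam : Finset M → ℝ | ∀ S, 0 ≤ lam S} := by
      have : {lam : Finset M → ℝ | ∀ S, 0 ≤ lam S} = ⋂ S, {lam | 0 ≤ lam S} := by
        ext; simp
      rw [this]
      exact isClosed_iInter fun S => isClosed_le continuous_const (continuous_apply S)
    have h2 : IsClosed {lam : Finset M → ℝ | ∀ S, ¬ S ⊆ U → lam S = 0} := by
      have : {lam : Finset M → ℝ | ∀ S, ¬ S ⊆ U → lam S = 0} =
          ⋂ S, {lam | ¬ S ⊆ U → lam S = 0} := by ext; simp
      rw [this]
      refine isClosed_iInter fun S => ?_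
      by_cases h : S ⊆ U
      · simp [h]
      · simpa [h] using isClosed_eq (continuous_apply S) continuous_const
    have h3 : IsClosed {lam : Finset M → ℝ | ∑ S ∈ U.powerset, lam S = 1} :=
      isClosed_eq (by exact continuous_finset_sum _ fun S _ => continuous_apply S)
        continuous_const
    have h4 : IsClosed {lam : Finset M → ℝ |
        ∀ j ∈ U, ∑ S ∈ U.powerset.filter (fun S => j ∈ S), lam S ≤ c} := by
      have : {lam : Finset M → ℝ |
          ∀ j ∈ U, ∑ S ∈ U.powerset.filter (fun S => j ∈ S), lam S ≤ c} =
          ⋂ j, ⋂ (_ : j ∈ U), {lam | ∑ S ∈ U.powerset.filter (fun S => j ∈ S), lam S ≤ c} := by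
        ext; simp
      rw [this]
      exact isClosed_iInter fun j => isClosed_iInter fun _ =>
        isClosed_le (continuous_finset_sum _ fun S _ => continuous_apply S) continuous_const
    have : D = {lam : Finset M → ℝ | ∀ S, 0 ≤ lam S} ∩
        ({lam | ∀ S, ¬ S ⊆ U → lam S = 0} ∩
          ({lam | ∑ S ∈ U.powerset, lam S = 1} ∩
            {lam | ∀ j ∈ U, ∑ S ∈ U.powerset.filter (fun S => j ∈ S), lam S ≤ c})) := by
      ext lam; simp only [hD, Set.mem_setOf_eq, Set.mem_inter_iff]
    rw [this]
    exact h1.inter (h2.inter (h3.inter h4))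
  have hsubset : D ⊆ Set.Icc (0 : Finset M → ℝ) 1 := by
    rintro lam ⟨hpos, hzero, hsum, -⟩
    refine ⟨fun S => hpos S, fun S => ?_⟩
    by_cases h : S ⊆ U
    · calc lam S ≤ ∑ T ∈ U.powerset, lam T :=
        Finset.single_le_sum (fun T _ => hpos T) (Finset.mem_powerset.mpr h)
      _ = 1 := hsum
    · simp [hzero S h]
  have hcompact : IsCompact D :=
    IsCompact.of_isClosed_subset isCompact_Icc hclosed hsubset
  have hne : D.Nonempty := by
    refine ⟨fun S => if S = ∅ then 1 else 0, fun S => by positivity, fun S hS => ?_, ?_, ?_⟩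
    · simp only [ite_eq_right_iff]
      intro h; exact absurd (h ▸ Finset.empty_subset U) hS
    · rw [Finset.sum_ite_eq' U.powerset ∅ (fun _ => (1:ℝ))]
      simp
    · intro j hj
      rw [Finset.sum_eq_zero]
      · exact hc
      · intro S hS
        simp only [Finset.mem_filter] at hS
        have : S ≠ ∅ := by
          rintro rfl; exact absurd hS.2 (Finset.notMem_empty j)
        simp [this]
  obtain ⟨lam, hlamD, hmax⟩ := hcompact.exists_isMaxOn hne
    ((continuous_finset_sum _ fun S _ => (continuous_apply S).mul continuous_const).continuousOn)
  obtain ⟨hpos, hzero, hsum, hmarg⟩ := hlamD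
  exact ⟨lam, hpos, hzero, hsum, hmarg, fun mu h1 h2 h3 h4 => hmax ⟨h1, h2, h3, h4⟩⟩


/-- **Existence of a good uniform-marginal distribution (Lemma on `g(q)`).**
For `m ≥ 3` items, a normalized, monotone, subadditive valuation `v`, and
`U ⊆ M`, with `ℓ = ⌈log₂⌈log₂ m⌉⌉` and `γ = (1/2 - 1/m)/(ℓ+1)`, there is a
`k ≤ ℓ` such that with `q = 2^{-2^k}` some distribution `lam ∈ Δ_U(q)`
guarantees, against every `mu ∈ Δ_U(q)`,
`Σ_{S,T⊆U} lam S · mu T · v (S \ T) ≥ γ · v U`. -/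
theorem stmt_2 {M : Type*} [Fintype M] [DecidableEq M]
    (hm : 3 ≤ Fintype.card M)
    (v : Finset M → ℝ)
    (hnorm : v ∅ = 0)
    (hmono : ∀ S T : Finset M, S ⊆ T → v S ≤ v T)
    (hsub : ∀ S T : Finset M, v (S ∪ T) ≤ v S + v T)
    (U : Finset M) :
    ∃ k : ℕ, k ≤ Nat.clog 2 (Nat.clog 2 (Fintype.card M)) ∧
      ∃ lam : Finset M → ℝ,
        (∀ S : Finset M, 0 ≤ lam S) ∧
        (∑ S ∈ U.powerset, lam S = 1) ∧
        (∀ j ∈ U,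
          ∑ S ∈ U.powerset.filter (fun S => j ∈ S), lam S ≤ ((2 : ℝ) ^ (2 ^ k))⁻¹) ∧
        (∀ mu : Finset M → ℝ,
          (∀ T : Finset M, 0 ≤ mu T) →
          (∑ T ∈ U.powerset, mu T = 1) →
          (∀ j ∈ U,
            ∑ T ∈ U.powerset.filter (fun T => j ∈ T), mu T ≤ ((2 : ℝ) ^ (2 ^ k))⁻¹) →
          ∑ S ∈ U.powerset, ∑ T ∈ U.powerset, lam S * mu T * v (S \ T) ≥
            ((1 / 2 - 1 / (Fintype.card M : ℝ)) /
                ((Nat.clog 2 (Nat.clog 2 (Fintype.card M)) : ℝ) + 1)) * v U) := by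
    classical
  set m := Fintype.card M with hmdef
  set L := Nat.clog 2 (Nat.clog 2 m) with hLdef
  have hmR : (3:ℝ) ≤ (m:ℝ) := by exact_mod_cast hm
  have hmpos : (0:ℝ) < (m:ℝ) := by linarith
  have H : ∀ k : ℕ, ∃ lam : Finset M → ℝ,
      (∀ S, 0 ≤ lam S) ∧ (∀ S, ¬ S ⊆ U → lam S = 0) ∧
      (∑ S ∈ U.powerset, lam S = 1) ∧
      (∀ j ∈ U, ∑ S ∈ U.powerset.filter (fun S => j ∈ S), lam S ≤ ((2:ℝ) ^ (2^k))⁻¹) ∧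
      (∀ mu : Finset M → ℝ, (∀ S, 0 ≤ mu S) → (∀ S, ¬ S ⊆ U → mu S = 0) →
        (∑ S ∈ U.powerset, mu S = 1) →
        (∀ j ∈ U, ∑ S ∈ U.powerset.filter (fun S => j ∈ S), mu S ≤ ((2:ℝ) ^ (2^k))⁻¹) →
        ∑ S ∈ U.powerset, mu S * v S ≤ ∑ S ∈ U.powerset, lam S * v S) :=
    fun k => exists_max_dist U v _ (by positivity)
  choose lam hpos hzero hsum hmarg hmax using H
  set E : ℕ → ℝ := fun k => ∑ S ∈ U.powerset, lam k S * v S with hEdef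
  have hEk : ∀ k, E k = ∑ S ∈ U.powerset, lam k S * v S := fun k => rfl
  have hvU : 0 ≤ v U := by
    have := hmono ∅ U (Finset.empty_subset U); linarith
  -- lower bound on E 0
  have hE0 : v U / 2 ≤ E 0 := by
    set lam' : Finset M → ℝ :=
      fun S => (if S = ∅ then (1:ℝ)/2 else 0) + (if S = U then (1:ℝ)/2 else 0) with hlam'
    have h1 : ∀ S, 0 ≤ lam' S := fun S => by
      simp only [hlam']; positivity
    have h2 : ∀ S, ¬ S ⊆ U → lam' S = 0 := by
      intro S hS
      have hne : S ≠ ∅ := fun h => hS (h ▸ Finset.empty_subset U)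
      have hnU : S ≠ U := fun h => hS (h ▸ subset_rfl)
      simp [hlam', hne, hnU]
    have h3 : ∑ S ∈ U.powerset, lam' S = 1 := by
      simp only [hlam', Finset.sum_add_distrib]
      rw [Finset.sum_ite_eq' U.powerset ∅ (fun _ => (1:ℝ)/2),
        Finset.sum_ite_eq' U.powerset U (fun _ => (1:ℝ)/2)]
      simp [Finset.empty_mem_powerset, Finset.mem_powerset]
      norm_num
    have h4 : ∀ j ∈ U, ∑ S ∈ U.powerset.filter (fun S => j ∈ S), lam' S ≤ ((2:ℝ) ^ (2^0))⁻¹ := by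
      intro j hj
      have : ((2:ℝ) ^ (2^0))⁻¹ = 1/2 := by norm_num
      rw [this]
      simp only [hlam', Finset.sum_add_distrib]
      have e1 : ∑ S ∈ U.powerset.filter (fun S => j ∈ S), (if S = ∅ then (1:ℝ)/2 else 0) = 0 := by
        apply Finset.sum_eq_zero
        intro S hS
        simp only [Finset.mem_filter] at hS
        have : S ≠ ∅ := by rintro rfl; exact absurd hS.2 (Finset.notMem_empty j)
        simp [this]
      have e2 : ∑ S ∈ U.powerset.filter (fun S => j ∈ S), (if S = U then (1:ℝ)/2 else 0) ≤ 1/2 := by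
        rw [Finset.sum_ite_eq' _ U (fun _ => (1:ℝ)/2)]
        split <;> norm_num
      linarith
    have h5 : ∑ S ∈ U.powerset, lam' S * v S = v U / 2 := by
      simp only [hlam', add_mul, ite_mul, zero_mul, Finset.sum_add_distrib]
      rw [Finset.sum_ite_eq' U.powerset ∅ (fun S => (1:ℝ)/2 * v S),
        Finset.sum_ite_eq' U.powerset U (fun S => (1:ℝ)/2 * v S)]
      simp [Finset.empty_mem_powerset, Finset.mem_powerset, hnorm]
      ring
    have := hmax 0 lam' h1 h2 h3 h4
    rw [h5] at this
    exact this
  -- m ≤ 2 ^ 2 ^ L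
  have hm2L : (m:ℝ) ≤ 2 ^ (2^L) := by
    have h1 : m ≤ 2 ^ Nat.clog 2 m := Nat.le_pow_clog one_lt_two m
    have h2 : Nat.clog 2 m ≤ 2 ^ L := Nat.le_pow_clog one_lt_two _
    have : m ≤ 2 ^ (2^L) := h1.trans (Nat.pow_le_pow_right (by norm_num) h2)
    exact_mod_cast this
  -- upper bound on E (L+1)
  have hEL : E (L+1) ≤ v U / m := by
    have hsing0 : ∀ j ∈ U, 0 ≤ v {j} := by
      intro j hj; have := hmono ∅ {j} (Finset.empty_subset _); linarith
    have hsingU : ∀ j ∈ U, v {j} ≤ v U := fun j hj =>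
      hmono _ _ (Finset.singleton_subset_iff.mpr hj)
    have step1 : E (L+1) ≤ ∑ S ∈ U.powerset, lam (L+1) S * ∑ j ∈ S, v {j} := by
      rw [hEk]
      apply Finset.sum_le_sum
      intro S _
      exact mul_le_mul_of_nonneg_left (subadd_singletons v hnorm hsub S) (hpos (L+1) S)
    have step2 : ∑ S ∈ U.powerset, lam (L+1) S * ∑ j ∈ S, v {j}
        = ∑ j ∈ U, (∑ S ∈ U.powerset.filter (fun S => j ∈ S), lam (L+1) S) * v {j} := by
      have e : ∀ S ∈ U.powerset, lam (L+1) S * ∑ j ∈ S, v {j}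
          = ∑ j ∈ U, (if j ∈ S then lam (L+1) S * v {j} else 0) := by
        intro S hS
        rw [Finset.mul_sum]
        have hUS : U ∩ S = S := Finset.inter_eq_right.mpr (Finset.mem_powerset.mp hS)
        rw [Finset.sum_ite_mem, hUS]
      rw [Finset.sum_congr rfl e, Finset.sum_comm]
      apply Finset.sum_congr rfl
      intro j _
      rw [Finset.sum_mul, Finset.sum_filter]
    have step3 : ∑ j ∈ U, (∑ S ∈ U.powerset.filter (fun S => j ∈ S), lam (L+1) S) * v {j}
        ≤ ((2:ℝ) ^ (2^(L+1)))⁻¹ * ((m:ℝ) * v U) := by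
      calc ∑ j ∈ U, (∑ S ∈ U.powerset.filter (fun S => j ∈ S), lam (L+1) S) * v {j}
          ≤ ∑ j ∈ U, ((2:ℝ) ^ (2^(L+1)))⁻¹ * v {j} := by
            apply Finset.sum_le_sum
            intro j hj
            exact mul_le_mul_of_nonneg_right (hmarg (L+1) j hj) (hsing0 j hj)
        _ = ((2:ℝ) ^ (2^(L+1)))⁻¹ * ∑ j ∈ U, v {j} := by rw [Finset.mul_sum]
        _ ≤ ((2:ℝ) ^ (2^(L+1)))⁻¹ * ((m:ℝ) * v U) := by
            apply mul_le_mul_of_nonneg_left _ (by positivity)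
            calc ∑ j ∈ U, v {j} ≤ ∑ j ∈ U, v U := Finset.sum_le_sum fun j hj => hsingU j hj
              _ = U.card * v U := by rw [Finset.sum_const, nsmul_eq_mul]
              _ ≤ (m:ℝ) * v U := by
                  apply mul_le_mul_of_nonneg_right _ hvU
                  exact_mod_cast Finset.card_le_card (Finset.subset_univ U) |>.trans_eq
                    (Finset.card_univ)
    have hc2 : ((2:ℝ) ^ (2^(L+1)))⁻¹ ≤ ((m:ℝ)^2)⁻¹ := by
      apply inv_anti₀ (by positivity)
      calc (m:ℝ)^2 ≤ ((2:ℝ) ^ (2^L))^2 := by nlinarith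
        _ = (2:ℝ) ^ (2^(L+1)) := by rw [← pow_mul]; ring_nf
    have final : ((2:ℝ) ^ (2^(L+1)))⁻¹ * ((m:ℝ) * v U) ≤ v U / m := by
      have h1 : ((2:ℝ) ^ (2^(L+1)))⁻¹ * ((m:ℝ) * v U) ≤ ((m:ℝ)^2)⁻¹ * ((m:ℝ) * v U) :=
        mul_le_mul_of_nonneg_right hc2 (by positivity)
      have h2 : ((m:ℝ)^2)⁻¹ * ((m:ℝ) * v U) = v U / m := by
        field_simp
      linarith
    linarith
  obtain ⟨k, hkL, hd⟩ := pigeon_aux E L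
  refine ⟨k, hkL, lam k, hpos k, hsum k, hmarg k, ?_⟩
  intro mu hmupos hmusum hmumarg
  -- gamma bound
  have hgam : ((1/2 - 1/(m:ℝ)) / ((L:ℝ) + 1)) * v U ≤ E k - E (k+1) := by
    have h1 : (1/2 - 1/(m:ℝ)) * v U ≤ E 0 - E (L+1) := by
      have e : (1/2 - 1/(m:ℝ)) * v U = v U / 2 - v U / m := by ring
      linarith
    calc ((1/2 - 1/(m:ℝ)) / ((L:ℝ) + 1)) * v U
        = ((1/2 - 1/(m:ℝ)) * v U) / ((L:ℝ) + 1) := by ring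
      _ ≤ (E 0 - E (L+1)) / ((L:ℝ) + 1) := by
          apply div_le_div_of_nonneg_right h1 (by positivity)
      _ ≤ E k - E (k+1) := hd
  -- the product-intersection distribution
  set nu : Finset M → ℝ := fun R =>
    ∑ S ∈ U.powerset, ∑ T ∈ U.powerset, (if S ∩ T = R then lam k S * mu T else 0) with hnu
  have key : ∀ g : Finset M → ℝ,
      ∑ R ∈ U.powerset, nu R * g R
        = ∑ S ∈ U.powerset, ∑ T ∈ U.powerset, lam k S * mu T * g (S ∩ T) := by
    intro g
    simp only [hnu]
    calc ∑ R ∈ U.powerset,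
          (∑ S ∈ U.powerset, ∑ T ∈ U.powerset, if S ∩ T = R then lam k S * mu T else 0) * g R
        = ∑ R ∈ U.powerset, ∑ S ∈ U.powerset, ∑ T ∈ U.powerset,
            (if S ∩ T = R then lam k S * mu T * g R else 0) := by
          apply Finset.sum_congr rfl; intro R _
          rw [Finset.sum_mul]
          apply Finset.sum_congr rfl; intro S _
          rw [Finset.sum_mul]
          apply Finset.sum_congr rfl; intro T _
          rw [ite_mul, zero_mul]
      _ = ∑ S ∈ U.powerset, ∑ T ∈ U.powerset, ∑ R ∈ U.powerset,
            (if S ∩ T = R then lam k S * mu T * g R else 0) := by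
          rw [Finset.sum_comm]
          apply Finset.sum_congr rfl; intro S _
          rw [Finset.sum_comm]
      _ = ∑ S ∈ U.powerset, ∑ T ∈ U.powerset, lam k S * mu T * g (S ∩ T) := by
          apply Finset.sum_congr rfl; intro S hS
          apply Finset.sum_congr rfl; intro T _
          rw [Finset.sum_ite_eq]
          have : S ∩ T ∈ U.powerset := Finset.mem_powerset.mpr
            ((Finset.inter_subset_left).trans (Finset.mem_powerset.mp hS))
          simp [this]
  have hnupos : ∀ R, 0 ≤ nu R := by
    intro R
    apply Finset.sum_nonneg; intro S _
    apply Finset.sum_nonneg; intro T _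
    split
    · exact mul_nonneg (hpos k S) (hmupos T)
    · exact le_rfl
  have hnuzero : ∀ R, ¬ R ⊆ U → nu R = 0 := by
    intro R hR
    simp only [hnu]
    apply Finset.sum_eq_zero; intro S hS
    apply Finset.sum_eq_zero; intro T _
    have : S ∩ T ≠ R := fun h =>
      hR (h ▸ (Finset.inter_subset_left.trans (Finset.mem_powerset.mp hS)))
    simp [this]
  have hnusum : ∑ R ∈ U.powerset, nu R = 1 := by
    have h := key (fun _ => 1)
    simp only [mul_one] at h
    rw [h, ← Finset.sum_mul_sum, hsum k, hmusum, mul_one]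
  have hnumarg : ∀ j ∈ U,
      ∑ R ∈ U.powerset.filter (fun R => j ∈ R), nu R ≤ ((2:ℝ) ^ (2^(k+1)))⁻¹ := by
    intro j hj
    have h1 : ∑ R ∈ U.powerset.filter (fun R => j ∈ R), nu R
        = ∑ R ∈ U.powerset, nu R * (if j ∈ R then 1 else 0) := by
      rw [Finset.sum_filter]
      apply Finset.sum_congr rfl; intro R _
      split <;> simp
    have h2 : ∑ S ∈ U.powerset, ∑ T ∈ U.powerset,
          lam k S * mu T * (if j ∈ S ∩ T then (1:ℝ) else 0)
        = (∑ S ∈ U.powerset.filter (fun S => j ∈ S), lam k S) *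
            (∑ T ∈ U.powerset.filter (fun T => j ∈ T), mu T) := by
      calc ∑ S ∈ U.powerset, ∑ T ∈ U.powerset,
            lam k S * mu T * (if j ∈ S ∩ T then (1:ℝ) else 0)
          = ∑ S ∈ U.powerset, ∑ T ∈ U.powerset,
              (if j ∈ S then lam k S else 0) * (if j ∈ T then mu T else 0) := by
            apply Finset.sum_congr rfl; intro S _
            apply Finset.sum_congr rfl; intro T _
            by_cases hS' : j ∈ S <;> by_cases hT' : j ∈ T <;>
              simp [hS', hT', Finset.mem_inter]
        _ = (∑ S ∈ U.powerset, if j ∈ S then lam k S else 0) *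
              (∑ T ∈ U.powerset, if j ∈ T then mu T else 0) := by
            rw [Finset.sum_mul_sum]
        _ = (∑ S ∈ U.powerset.filter (fun S => j ∈ S), lam k S) *
              (∑ T ∈ U.powerset.filter (fun T => j ∈ T), mu T) := by
            rw [Finset.sum_filter, Finset.sum_filter]
    have hb : (∑ S ∈ U.powerset.filter (fun S => j ∈ S), lam k S) *
          (∑ T ∈ U.powerset.filter (fun T => j ∈ T), mu T)
        ≤ ((2:ℝ)^(2^k))⁻¹ * ((2:ℝ)^(2^k))⁻¹ := by
      apply mul_le_mul (hmarg k j hj) (hmumarg j hj)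
        (Finset.sum_nonneg fun T _ => hmupos T) (by positivity)
    have hc2 : ((2:ℝ)^(2^k))⁻¹ * ((2:ℝ)^(2^k))⁻¹ = ((2:ℝ)^(2^(k+1)))⁻¹ := by
      rw [← mul_inv, ← pow_add]
      congr 1
      ring
    rw [h1, key]
    rw [h2]
    linarith
  have hnuE : ∑ R ∈ U.powerset, nu R * v R ≤ E (k+1) :=
    hmax (k+1) nu hnupos hnuzero hnusum hnumarg
  have main2 : ∑ S ∈ U.powerset, ∑ T ∈ U.powerset, lam k S * mu T * v S = E k := by
    calc ∑ S ∈ U.powerset, ∑ T ∈ U.powerset, lam k S * mu T * v S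
        = ∑ S ∈ U.powerset, lam k S * v S * ∑ T ∈ U.powerset, mu T := by
          apply Finset.sum_congr rfl; intro S _
          rw [Finset.mul_sum]
          apply Finset.sum_congr rfl; intro T _
          ring
      _ = E k := by rw [hmusum]; simp [hEk]
  have main1 : ∑ S ∈ U.powerset, ∑ T ∈ U.powerset, lam k S * mu T * v S
        - ∑ S ∈ U.powerset, ∑ T ∈ U.powerset, lam k S * mu T * v (S ∩ T)
      ≤ ∑ S ∈ U.powerset, ∑ T ∈ U.powerset, lam k S * mu T * v (S \ T) := by
    rw [← Finset.sum_sub_distrib]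
    apply Finset.sum_le_sum; intro S _
    rw [← Finset.sum_sub_distrib]
    apply Finset.sum_le_sum; intro T _
    have hv : v S ≤ v (S \ T) + v (S ∩ T) := by
      have := hsub (S \ T) (S ∩ T)
      rwa [Finset.sdiff_union_inter] at this
    have hnn : 0 ≤ lam k S * mu T := mul_nonneg (hpos k S) (hmupos T)
    nlinarith
  have main3 : ∑ S ∈ U.powerset, ∑ T ∈ U.powerset, lam k S * mu T * v (S ∩ T) ≤ E (k+1) := by
    rw [← key v]; exact hnuE
  rw [ge_iff_le]
  linarith
end

section
/- Let M be a finite set of items, v : Finset M → ℝ a normalized, monotone, subadditive valuation, U ⊆ M, and q ∈ [0,1]. Then for every λ ∈ Δ_U(q) and every μ ∈ Δ_U(q): Σ_{S,T⊆U} λ_S μ_T v(S∖T) ≥ Σ_{S⊆U} λ_S v(S) − f_U(q²). -/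
/-- `fU v U q` = sup of `Σ_{S⊆U} lam S · v S` over distributions `lam` on
subsets of `U` whose marginal on each item of `U` is at most `q`. -/
noncomputable def fU {M : Type*} [Fintype M] [DecidableEq M]
    (v : Finset M → ℝ) (U : Finset M) (q : ℝ) : ℝ :=
  sSup { x : ℝ | ∃ lam : Finset M → ℝ,
    (∀ S : Finset M, 0 ≤ lam S) ∧
    (∑ S ∈ U.powerset, lam S = 1) ∧
    (∀ j ∈ U, ∑ S ∈ U.powerset.filter (fun S => j ∈ S), lam S ≤ q) ∧
    x = ∑ S ∈ U.powerset, lam S * v S }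

lemma rearrange_aux {M : Type*} [Fintype M] [DecidableEq M] (U : Finset M)
    (lam mu g : Finset M → ℝ) :
    ∑ R ∈ U.powerset, (∑ S ∈ U.powerset, ∑ T ∈ U.powerset,
        if S ∩ T = R then lam S * mu T else 0) * g R
    = ∑ S ∈ U.powerset, ∑ T ∈ U.powerset, lam S * mu T * g (S ∩ T) := by
  simp only [Finset.sum_mul, ite_mul, zero_mul]
  rw [Finset.sum_comm]
  refine Finset.sum_congr rfl fun S hS => ?_
  rw [Finset.sum_comm]
  refine Finset.sum_congr rfl fun T hT => ?_
  rw [Finset.sum_ite_eq U.powerset (S ∩ T) (fun R => lam S * mu T * g R),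
    if_pos (Finset.mem_powerset.2 ((Finset.inter_subset_left).trans (Finset.mem_powerset.1 hS)))]


/-- **Value of the zero-sum game is at least `f(q) - f(q²)` (pointwise form).**
For any `lam, mu ∈ Δ_U(q)`,
`Σ_{S,T⊆U} lam S · mu T · v (S \ T) ≥ Σ_{S⊆U} lam S · v S − f_U(q²)`. -/
theorem stmt_3 {M : Type*} [Fintype M] [DecidableEq M]
    (v : Finset M → ℝ)
    (hnorm : v ∅ = 0)
    (hmono : ∀ S T : Finset M, S ⊆ T → v S ≤ v T)
    (hsub : ∀ S T : Finset M, v (S ∪ T) ≤ v S + v T)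
    (U : Finset M) (q : ℝ) (hq0 : 0 ≤ q) (hq1 : q ≤ 1)
    (lam : Finset M → ℝ)
    (hlam0 : ∀ S : Finset M, 0 ≤ lam S)
    (hlam1 : ∑ S ∈ U.powerset, lam S = 1)
    (hlamq : ∀ j ∈ U, ∑ S ∈ U.powerset.filter (fun S => j ∈ S), lam S ≤ q)
    (mu : Finset M → ℝ)
    (hmu0 : ∀ T : Finset M, 0 ≤ mu T)
    (hmu1 : ∑ T ∈ U.powerset, mu T = 1)
    (hmuq : ∀ j ∈ U, ∑ T ∈ U.powerset.filter (fun T => j ∈ T), mu T ≤ q) :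
    ∑ S ∈ U.powerset, ∑ T ∈ U.powerset, lam S * mu T * v (S \ T) ≥
      (∑ S ∈ U.powerset, lam S * v S) - fU v U (q ^ 2) := by
  set nu : Finset M → ℝ := fun R => ∑ S ∈ U.powerset, ∑ T ∈ U.powerset,
      if S ∩ T = R then lam S * mu T else 0 with hnu
  -- key value
  have hkey : (∑ S ∈ U.powerset, ∑ T ∈ U.powerset, lam S * mu T * v (S ∩ T))
      ∈ { x : ℝ | ∃ lam : Finset M → ℝ,
        (∀ S : Finset M, 0 ≤ lam S) ∧
        (∑ S ∈ U.powerset, lam S = 1) ∧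
        (∀ j ∈ U, ∑ S ∈ U.powerset.filter (fun S => j ∈ S), lam S ≤ q ^ 2) ∧
        x = ∑ S ∈ U.powerset, lam S * v S } := by
    refine ⟨nu, ?_, ?_, ?_, ?_⟩
    · intro R
      refine Finset.sum_nonneg fun S _ => Finset.sum_nonneg fun T _ => ?_
      split
      · exact mul_nonneg (hlam0 S) (hmu0 T)
      · exact le_rfl
    · have := rearrange_aux U lam mu (fun _ => 1)
      simpa [hlam1, hmu1, Finset.sum_mul, ← Finset.mul_sum] using this
    · intro j hj
      have hrw : ∑ R ∈ U.powerset.filter (fun R => j ∈ R), nu R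
          = (∑ S ∈ U.powerset.filter (fun S => j ∈ S), lam S) *
            (∑ T ∈ U.powerset.filter (fun T => j ∈ T), mu T) := by
        rw [Finset.sum_filter, Finset.sum_filter, Finset.sum_filter, Finset.sum_mul_sum]
        have h1 : ∀ R ∈ U.powerset, (if j ∈ R then nu R else 0)
            = ∑ S ∈ U.powerset, ∑ T ∈ U.powerset,
              if S ∩ T = R then (if j ∈ S then lam S else 0) * (if j ∈ T then mu T else 0) else 0 := by
          intro R _
          by_cases h : j ∈ R
          · simp only [if_pos h, hnu]
            refine Finset.sum_congr rfl fun S _ => Finset.sum_congr rfl fun T _ => ?_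
            by_cases hST : S ∩ T = R
            · have hjS : j ∈ S := (Finset.mem_inter.1 (hST ▸ h)).1
              have hjT : j ∈ T := (Finset.mem_inter.1 (hST ▸ h)).2
              simp [hST, hjS, hjT]
            · simp [hST]
          · simp only [if_neg h]
            symm
            refine Finset.sum_eq_zero fun S _ => Finset.sum_eq_zero fun T _ => ?_
            by_cases hST : S ∩ T = R
            · rcases Classical.em (j ∈ S) with hS | hS
              · rcases Classical.em (j ∈ T) with hT | hT
                · exact absurd (hST ▸ Finset.mem_inter.2 ⟨hS, hT⟩) h
                · simp [hST, hT]
              · simp [hST, hS]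
            · simp [hST]
        rw [Finset.sum_congr rfl h1, Finset.sum_comm]
        refine Finset.sum_congr rfl fun S hS => ?_
        rw [Finset.sum_comm]
        refine Finset.sum_congr rfl fun T hT => ?_
        rw [Finset.sum_ite_eq U.powerset (S ∩ T)
          (fun _ => (if j ∈ S then lam S else 0) * (if j ∈ T then mu T else 0)),
          if_pos (Finset.mem_powerset.2
            ((Finset.inter_subset_left).trans (Finset.mem_powerset.1 hS)))]
      rw [hrw, pow_two]
      have hl0 : 0 ≤ ∑ S ∈ U.powerset.filter (fun S => j ∈ S), lam S :=
        Finset.sum_nonneg fun S _ => hlam0 S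
      have hm0 : 0 ≤ ∑ T ∈ U.powerset.filter (fun T => j ∈ T), mu T :=
        Finset.sum_nonneg fun T _ => hmu0 T
      exact mul_le_mul (hlamq j hj) (hmuq j hj) hm0 hq0
    · exact (rearrange_aux U lam mu v).symm
  have hbdd : BddAbove { x : ℝ | ∃ lam : Finset M → ℝ,
        (∀ S : Finset M, 0 ≤ lam S) ∧
        (∑ S ∈ U.powerset, lam S = 1) ∧
        (∀ j ∈ U, ∑ S ∈ U.powerset.filter (fun S => j ∈ S), lam S ≤ q ^ 2) ∧
        x = ∑ S ∈ U.powerset, lam S * v S } := by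
    refine ⟨v U, fun x hx => ?_⟩
    obtain ⟨k, hk0, hk1, -, hkx⟩ := hx
    rw [hkx]
    calc ∑ S ∈ U.powerset, k S * v S
        ≤ ∑ S ∈ U.powerset, k S * v U := by
          refine Finset.sum_le_sum fun S hS => ?_
          exact mul_le_mul_of_nonneg_left (hmono S U (Finset.mem_powerset.1 hS)) (hk0 S)
      _ = v U := by rw [← Finset.sum_mul, hk1, one_mul]
  have hle : (∑ S ∈ U.powerset, ∑ T ∈ U.powerset, lam S * mu T * v (S ∩ T))
      ≤ fU v U (q ^ 2) := le_csSup hbdd hkey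
  -- main subadditivity step
  have hmain : (∑ S ∈ U.powerset, lam S * v S)
      ≤ (∑ S ∈ U.powerset, ∑ T ∈ U.powerset, lam S * mu T * v (S \ T))
        + ∑ S ∈ U.powerset, ∑ T ∈ U.powerset, lam S * mu T * v (S ∩ T) := by
    rw [← Finset.sum_add_distrib]
    have : ∀ S ∈ U.powerset, lam S * v S
        = ∑ T ∈ U.powerset, lam S * mu T * v S := by
      intro S _
      rw [← Finset.sum_mul, ← Finset.mul_sum, hmu1, mul_one]
    rw [Finset.sum_congr rfl this]
    refine Finset.sum_le_sum fun S _ => ?_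
    rw [← Finset.sum_add_distrib]
    refine Finset.sum_le_sum fun T _ => ?_
    rw [← mul_add]
    refine mul_le_mul_of_nonneg_left ?_ (mul_nonneg (hlam0 S) (hmu0 T))
    have := hsub (S \ T) (S ∩ T)
    rwa [Finset.sdiff_union_inter] at this
  linarith
end

section
/- Let M be a finite set of items, U ⊆ M, and q ∈ [0,1]. If λ, μ ∈ Δ_U(q), then the function ν defined on subsets of U by ν_R := Σ_{S,T⊆U : S∩T=R} λ_S μ_T is a distribution over subsets of U belonging to Δ_U(q²); consequently, for every normalized, monotone, subadditive valuation v : Finset M → ℝ, Σ_{S,T⊆U} λ_S μ_T v(S∩T) ≤ f_U(q²). -/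
/-- The distribution of `S ∩ T` when `S ∼ lam` and `T ∼ mu` independently. -/
noncomputable def nuFun {M : Type*} [Fintype M] [DecidableEq M]
    (U : Finset M) (lam mu : Finset M → ℝ) : Finset M → ℝ :=
  fun R => ∑ S ∈ U.powerset, ∑ T ∈ U.powerset,
    if S ∩ T = R then lam S * mu T else 0

/-- key swap lemma -/
lemma nu_key {M : Type*} [Fintype M] [DecidableEq M]
    (U : Finset M) (lam mu : Finset M → ℝ) (g : Finset M → ℝ) :
    ∑ R ∈ U.powerset, nuFun U lam mu R * g R =
    ∑ S ∈ U.powerset, ∑ T ∈ U.powerset, lam S * mu T * g (S ∩ T) := by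
  unfold nuFun
  simp only [Finset.sum_mul, ite_mul, zero_mul]
  rw [Finset.sum_comm]
  refine Finset.sum_congr rfl fun S hS => ?_
  rw [Finset.sum_comm]
  refine Finset.sum_congr rfl fun T hT => ?_
  rw [Finset.sum_ite_eq U.powerset (S ∩ T) (fun R => lam S * mu T * g R)]
  simp only [Finset.mem_powerset] at hS ⊢
  rw [if_pos (Finset.inter_subset_left.trans hS)]

/-- **The intersection of two `q`-marginal draws has `q²` marginals.**
If `lam, mu ∈ Δ_U(q)`, then `ν R = Σ_{S∩T=R} lam S · mu T` is a distribution
over subsets of `U` lying in `Δ_U(q²)`; consequently, for every normalized,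
monotone, subadditive valuation `v`,
`Σ_{S,T⊆U} lam S · mu T · v (S ∩ T) ≤ f_U(q²)`. -/
theorem stmt_4 {M : Type*} [Fintype M] [DecidableEq M]
    (U : Finset M) (q : ℝ) (hq0 : 0 ≤ q) (hq1 : q ≤ 1)
    (lam : Finset M → ℝ)
    (hlam0 : ∀ S : Finset M, 0 ≤ lam S)
    (hlam1 : ∑ S ∈ U.powerset, lam S = 1)
    (hlamq : ∀ j ∈ U, ∑ S ∈ U.powerset.filter (fun S => j ∈ S), lam S ≤ q)
    (mu : Finset M → ℝ)
    (hmu0 : ∀ T : Finset M, 0 ≤ mu T)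
    (hmu1 : ∑ T ∈ U.powerset, mu T = 1)
    (hmuq : ∀ j ∈ U, ∑ T ∈ U.powerset.filter (fun T => j ∈ T), mu T ≤ q) :
    (∀ R : Finset M, 0 ≤ nuFun U lam mu R) ∧
    (∑ R ∈ U.powerset, nuFun U lam mu R = 1) ∧
    (∀ j ∈ U,
      ∑ R ∈ U.powerset.filter (fun R => j ∈ R), nuFun U lam mu R ≤ q ^ 2) ∧
    (∀ v : Finset M → ℝ,
      v ∅ = 0 →
      (∀ S T : Finset M, S ⊆ T → v S ≤ v T) →
      (∀ S T : Finset M, v (S ∪ T) ≤ v S + v T) →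
      ∑ S ∈ U.powerset, ∑ T ∈ U.powerset, lam S * mu T * v (S ∩ T) ≤
        fU v U (q ^ 2)) := by
  have hnu0 : ∀ R : Finset M, 0 ≤ nuFun U lam mu R := by
    intro R
    refine Finset.sum_nonneg fun S _ => Finset.sum_nonneg fun T _ => ?_
    split
    · exact mul_nonneg (hlam0 S) (hmu0 T)
    · exact le_rfl
  have hnu1 : ∑ R ∈ U.powerset, nuFun U lam mu R = 1 := by
    have := nu_key U lam mu (fun _ => 1)
    simp only [mul_one] at this
    rw [this]
    calc ∑ S ∈ U.powerset, ∑ T ∈ U.powerset, lam S * mu T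
        = (∑ S ∈ U.powerset, lam S) * (∑ T ∈ U.powerset, mu T) := by
          rw [Finset.sum_mul_sum]
      _ = 1 := by rw [hlam1, hmu1, one_mul]
  have hnuq : ∀ j ∈ U,
      ∑ R ∈ U.powerset.filter (fun R => j ∈ R), nuFun U lam mu R ≤ q ^ 2 := by
    intro j hj
    have h1 : ∑ R ∈ U.powerset.filter (fun R => j ∈ R), nuFun U lam mu R =
        ∑ R ∈ U.powerset, nuFun U lam mu R * (if j ∈ R then 1 else 0) := by
      rw [Finset.sum_filter]
      exact Finset.sum_congr rfl fun R _ => by split <;> simp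
    rw [h1, nu_key]
    have h2 : ∀ S T : Finset M,
        lam S * mu T * (if j ∈ S ∩ T then (1:ℝ) else 0) =
        (if j ∈ S then lam S else 0) * (if j ∈ T then mu T else 0) := by
      intro S T
      by_cases hS : j ∈ S <;> by_cases hT : j ∈ T <;>
        simp [Finset.mem_inter, hS, hT]
    simp only [h2]
    rw [← Finset.sum_mul_sum]
    have hl : ∑ S ∈ U.powerset, (if j ∈ S then lam S else 0) ≤ q := by
      rw [← Finset.sum_filter]; exact hlamq j hj
    have hm : ∑ T ∈ U.powerset, (if j ∈ T then mu T else 0) ≤ q := by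
      rw [← Finset.sum_filter]; exact hmuq j hj
    have hl0 : 0 ≤ ∑ S ∈ U.powerset, (if j ∈ S then lam S else 0) :=
      Finset.sum_nonneg fun S _ => by split <;> [exact hlam0 S; exact le_rfl]
    have hm0 : 0 ≤ ∑ T ∈ U.powerset, (if j ∈ T then mu T else 0) :=
      Finset.sum_nonneg fun T _ => by split <;> [exact hmu0 T; exact le_rfl]
    calc _ ≤ q * q := mul_le_mul hl hm hm0 hq0
    _ = q ^ 2 := (sq q).symm
  refine ⟨hnu0, hnu1, hnuq, ?_⟩
  intro v hv0 hvmono hvsub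
  rw [← nu_key]
  have hmem : (∑ R ∈ U.powerset, nuFun U lam mu R * v R) ∈
      { x : ℝ | ∃ nu : Finset M → ℝ,
        (∀ S : Finset M, 0 ≤ nu S) ∧
        (∑ S ∈ U.powerset, nu S = 1) ∧
        (∀ j ∈ U, ∑ S ∈ U.powerset.filter (fun S => j ∈ S), nu S ≤ q ^ 2) ∧
        x = ∑ S ∈ U.powerset, nu S * v S } :=
    ⟨nuFun U lam mu, hnu0, hnu1, hnuq, rfl⟩
  refine le_csSup ?_ hmem
  -- bounded above by max of v on powerset
  obtain ⟨C, hC⟩ : ∃ C, ∀ S ∈ U.powerset, v S ≤ C := by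
    refine ⟨(U.powerset.image v).max' (by simp [Finset.powerset_nonempty]), ?_⟩
    intro S hS
    exact Finset.le_max' _ _ (Finset.mem_image_of_mem v hS)
  have hC0 : 0 ≤ C := (hv0 ▸ hC ∅ (by simp))
  refine ⟨C, ?_⟩
  rintro x ⟨nu, hnu0', hnu1', _, rfl⟩
  calc ∑ S ∈ U.powerset, nu S * v S
      ≤ ∑ S ∈ U.powerset, nu S * C := by
        refine Finset.sum_le_sum fun S hS => mul_le_mul_of_nonneg_left (hC S hS) (hnu0' S)
    _ = C := by rw [← Finset.sum_mul, hnu1', one_mul]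
end

section
/- Let M be a finite set of m ≥ 1 items, v : Finset M → ℝ a normalized, monotone, subadditive valuation, and U ⊆ M. Then f_U(1/2) ≥ v(U)/2, and f_U(1/m²) ≤ v(U)/m; in particular, for every λ ∈ Δ_U(1/m²), Σ_{S⊆U} λ_S v(S) ≤ v(U)/m. -/
/-- **Bounds at the endpoints of the telescoping sum.**
For `m ≥ 1` items: `f_U(1/2) ≥ v(U)/2` and `f_U(1/m²) ≤ v(U)/m`; in
particular every `lam ∈ Δ_U(1/m²)` satisfies `Σ_{S⊆U} lam S · v S ≤ v(U)/m`. -/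
theorem stmt_5 {M : Type*} [Fintype M] [DecidableEq M]
    (hm : 1 ≤ Fintype.card M)
    (v : Finset M → ℝ)
    (hnorm : v ∅ = 0)
    (hmono : ∀ S T : Finset M, S ⊆ T → v S ≤ v T)
    (hsub : ∀ S T : Finset M, v (S ∪ T) ≤ v S + v T)
    (U : Finset M) :
    fU v U (1 / 2) ≥ v U / 2 ∧
    fU v U (1 / (Fintype.card M : ℝ) ^ 2) ≤ v U / (Fintype.card M : ℝ) ∧
    (∀ lam : Finset M → ℝ,
      (∀ S : Finset M, 0 ≤ lam S) →
      (∑ S ∈ U.powerset, lam S = 1) →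
      (∀ j ∈ U,
        ∑ S ∈ U.powerset.filter (fun S => j ∈ S), lam S ≤
          1 / (Fintype.card M : ℝ) ^ 2) →
      ∑ S ∈ U.powerset, lam S * v S ≤ v U / (Fintype.card M : ℝ)) := by
  classical
  set m : ℝ := (Fintype.card M : ℝ) with hmdef
  have hm1 : (1:ℝ) ≤ m := by rw [hmdef]; exact_mod_cast hm
  have hmpos : (0:ℝ) < m := lt_of_lt_of_le one_pos hm1
  have hvU0 : 0 ≤ v U := hnorm ▸ hmono ∅ U (Finset.empty_subset U)
  have hv1 : ∀ j : M, 0 ≤ v {j} := fun j => hnorm ▸ hmono ∅ {j} (Finset.empty_subset _)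
  have hvsum : ∀ S : Finset M, v S ≤ ∑ j ∈ S, v {j} := by
    intro S
    induction S using Finset.induction with
    | empty => simp [hnorm]
    | insert _ _ ha ih =>
      rename_i a S
      rw [Finset.sum_insert ha]
      calc v (insert a S) = v ({a} ∪ S) := by rw [Finset.insert_eq]
        _ ≤ v {a} + v S := hsub _ _
        _ ≤ v {a} + ∑ j ∈ S, v {j} := by linarith
  -- the key inequality (third conjunct)
  have key : ∀ lam : Finset M → ℝ, (∀ S, 0 ≤ lam S) →
      (∑ S ∈ U.powerset, lam S = 1) →
      (∀ j ∈ U, ∑ S ∈ U.powerset.filter (fun S => j ∈ S), lam S ≤ 1 / m ^ 2) →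
      ∑ S ∈ U.powerset, lam S * v S ≤ v U / m := by
    intro lam h0 h1 hmarg
    have step1 : ∑ S ∈ U.powerset, lam S * v S ≤
        ∑ S ∈ U.powerset, ∑ j ∈ S, lam S * v {j} := by
      apply Finset.sum_le_sum
      intro S hS
      rw [← Finset.mul_sum]
      exact mul_le_mul_of_nonneg_left (hvsum S) (h0 S)
    have swap : ∑ S ∈ U.powerset, ∑ j ∈ S, lam S * v {j}
        = ∑ j ∈ U, ∑ S ∈ U.powerset.filter (fun S => j ∈ S), lam S * v {j} := by
      have e1 : ∀ S ∈ U.powerset, ∑ j ∈ S, lam S * v {j}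
          = ∑ j ∈ U, if j ∈ S then lam S * v {j} else 0 := by
        intro S hS
        rw [← Finset.sum_filter]
        congr 1
        rw [Finset.filter_mem_eq_inter]
        exact (Finset.inter_eq_right.mpr (Finset.mem_powerset.mp hS)).symm
      rw [Finset.sum_congr rfl e1, Finset.sum_comm]
      exact Finset.sum_congr rfl fun j _ => (Finset.sum_filter _ _).symm
    have step2 : ∑ j ∈ U, ∑ S ∈ U.powerset.filter (fun S => j ∈ S), lam S * v {j}
        ≤ ∑ j ∈ U, 1 / m ^ 2 * v U := by
      apply Finset.sum_le_sum
      intro j hj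
      rw [← Finset.sum_mul]
      calc (∑ S ∈ U.powerset.filter (fun S => j ∈ S), lam S) * v {j}
          ≤ (1 / m ^ 2) * v {j} :=
            mul_le_mul_of_nonneg_right (hmarg j hj) (hv1 j)
        _ ≤ (1 / m ^ 2) * v U := by
            apply mul_le_mul_of_nonneg_left
            · exact hmono {j} U (Finset.singleton_subset_iff.mpr hj)
            · positivity
    have step3 : ∑ j ∈ U, 1 / m ^ 2 * v U ≤ v U / m := by
      rw [Finset.sum_const, nsmul_eq_mul]
      have hcard : (U.card : ℝ) ≤ m := by
        rw [hmdef]; exact_mod_cast Finset.card_le_univ U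
      have h2 : (U.card : ℝ) * (1 / m ^ 2 * v U) ≤ m * (1 / m ^ 2 * v U) := by
        apply mul_le_mul_of_nonneg_right hcard
        positivity
      have h3 : m * (1 / m ^ 2 * v U) = v U / m := by
        field_simp
      linarith
    linarith
  refine ⟨?_, ?_, key⟩
  · -- f_U(1/2) ≥ v U / 2
    set lam : Finset M → ℝ :=
      fun S => (if S = U then (1:ℝ)/2 else 0) + (if S = ∅ then (1:ℝ)/2 else 0) with hlam
    have hUmem : U ∈ U.powerset := Finset.mem_powerset_self U
    have hEmem : (∅ : Finset M) ∈ U.powerset := Finset.empty_mem_powerset U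
    have hmem : v U / 2 ∈ { x : ℝ | ∃ lam : Finset M → ℝ,
        (∀ S : Finset M, 0 ≤ lam S) ∧
        (∑ S ∈ U.powerset, lam S = 1) ∧
        (∀ j ∈ U, ∑ S ∈ U.powerset.filter (fun S => j ∈ S), lam S ≤ 1/2) ∧
        x = ∑ S ∈ U.powerset, lam S * v S } := by
      refine ⟨lam, fun S => by simp only [hlam]; positivity, ?_, ?_, ?_⟩
      · rw [Finset.sum_add_distrib, Finset.sum_ite_eq' _ U, Finset.sum_ite_eq' _ ∅,
          if_pos hUmem, if_pos hEmem]
        norm_num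
      · intro j hj
        have : ∀ S ∈ U.powerset.filter (fun S => j ∈ S),
            lam S = if S = U then (1:ℝ)/2 else 0 := by
          intro S hS
          have hjS : j ∈ S := (Finset.mem_filter.mp hS).2
          have : S ≠ ∅ := Finset.ne_empty_of_mem hjS
          simp [hlam, this]
        rw [Finset.sum_congr rfl this, Finset.sum_ite_eq' _ U]
        split <;> norm_num
      · have : ∀ S ∈ U.powerset, lam S * v S =
            (if S = U then (1:ℝ)/2 * v S else 0) + (if S = ∅ then (1:ℝ)/2 * v S else 0) := by
          intro S _
          simp only [hlam]
          split <;> split <;> ring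
        rw [Finset.sum_congr rfl this, Finset.sum_add_distrib,
          Finset.sum_ite_eq' _ U, Finset.sum_ite_eq' _ ∅, if_pos hUmem, if_pos hEmem,
          hnorm]
        ring
    have hbdd : BddAbove { x : ℝ | ∃ lam : Finset M → ℝ,
        (∀ S : Finset M, 0 ≤ lam S) ∧
        (∑ S ∈ U.powerset, lam S = 1) ∧
        (∀ j ∈ U, ∑ S ∈ U.powerset.filter (fun S => j ∈ S), lam S ≤ 1/2) ∧
        x = ∑ S ∈ U.powerset, lam S * v S } := by
      refine ⟨v U, ?_⟩
      rintro x ⟨mu, h0, h1, _, hx⟩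
      rw [hx]
      calc ∑ S ∈ U.powerset, mu S * v S
          ≤ ∑ S ∈ U.powerset, mu S * v U := by
            apply Finset.sum_le_sum
            intro S hS
            exact mul_le_mul_of_nonneg_left (hmono S U (Finset.mem_powerset.mp hS)) (h0 S)
        _ = v U := by rw [← Finset.sum_mul, h1, one_mul]
    exact le_csSup hbdd hmem
  · -- f_U(1/m²) ≤ v U / m
    apply Real.sSup_le
    · rintro x ⟨mu, h0, h1, hmarg, hx⟩
      rw [hx]
      exact key mu h0 h1 hmarg
    · positivity
end

section
/- Let M be a finite set of m ≥ 3 items and for each i ∈ {1,…,n} let V_i be a finite nonempty type, D_i a probability mass function on V_i, and v_i^t : Finset M → ℝ a normalized, monotone, subadditive valuation for each t ∈ V_i. Set ℓ := ⌈log₂⌈log₂ m⌉⌉ and γ := (1/2 − 1/m)/(ℓ+1). Then there exists a natural number k with 0 ≤ k ≤ ℓ such that, with q := 2^{−2^k}, E_t[ g^{v^t}(q) ] ≥ γ · E_t[ OPT(v^t) ], where the expectation is over t_i ∼ D_i drawn independently and v^t = (v_1^{t_1},…,v_n^{t_n}). -/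
/-- The optimal welfare: supremum of `Σ_i v_i (x_i)` over allocations, i.e.
tuples of pairwise disjoint subsets of `M`. -/
noncomputable def OPT {M : Type*} [Fintype M] [DecidableEq M] {n : ℕ}
    (v : Fin n → Finset M → ℝ) : ℝ :=
  sSup { w : ℝ | ∃ x : Fin n → Finset M,
    (∀ i k : Fin n, i ≠ k → Disjoint (x i) (x k)) ∧
    w = ∑ i : Fin n, v i (x i) }

/-- The value `g^v(q)` of the constrained zero-sum game. -/
noncomputable def gv {M : Type*} [Fintype M] [DecidableEq M] {n : ℕ}
    (v : Fin n → Finset M → ℝ) (q : ℝ) : ℝ :=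
  sSup { w : ℝ | ∃ lam : Fin n → Finset M → ℝ,
    (∀ i, ∀ S : Finset M, 0 ≤ lam i S) ∧
    (∀ i, ∑ S : Finset M, lam i S ≤ 1) ∧
    (∀ j : M, ∑ i : Fin n,
      ∑ S ∈ Finset.univ.filter (fun S : Finset M => j ∈ S), lam i S ≤ q) ∧
    w = sInf { z : ℝ | ∃ mu : Finset M → ℝ,
      (∀ T : Finset M, 0 ≤ mu T) ∧
      (∑ T : Finset M, mu T = 1) ∧
      (∀ j : M, ∑ T ∈ Finset.univ.filter (fun T : Finset M => j ∈ T), mu T ≤ q) ∧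
      z = ∑ T : Finset M, mu T *
            ∑ i : Fin n, ∑ S : Finset M, lam i S * v i (S \ T) } }

/-- Expectation of `F` over independent type profiles `t` with `t i ∼ D i`. -/
noncomputable def Expect {n : ℕ} {V : Fin n → Type*} [∀ i, Fintype (V i)]
    (D : ∀ i, V i → ℝ) (F : (∀ i, V i) → ℝ) : ℝ :=
  ∑ t : ∀ i, V i, (∏ i : Fin n, D i (t i)) * F t


set_option linter.unusedSectionVars false
set_option maxHeartbeats 1000000
namespace Stmt9
variable {M : Type*} [Fintype M] [DecidableEq M] {n : ℕ}

/-- feasibility at level `q` -/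
def IsFeas (q : ℝ) (lam : Fin n → Finset M → ℝ) : Prop :=
  (∀ i, ∀ S : Finset M, 0 ≤ lam i S) ∧ (∀ i, ∑ S : Finset M, lam i S ≤ 1) ∧
  (∀ j : M, ∑ i : Fin n,
      ∑ S ∈ Finset.univ.filter (fun S : Finset M => j ∈ S), lam i S ≤ q)

noncomputable def Val (u : Fin n → Finset M → ℝ) (lam : Fin n → Finset M → ℝ) : ℝ :=
  ∑ i : Fin n, ∑ S : Finset M, lam i S * u i S

/-- fractional welfare with marginals `q` -/
noncomputable def W (u : Fin n → Finset M → ℝ) (q : ℝ) : ℝ :=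
  sSup { w : ℝ | ∃ lam : Fin n → Finset M → ℝ, IsFeas q lam ∧ w = Val u lam }

noncomputable def B (u : Fin n → Finset M → ℝ) : ℝ :=
  ∑ i : Fin n, ∑ S : Finset M, u i S

def Zset (u : Fin n → Finset M → ℝ) (q : ℝ) (lam : Fin n → Finset M → ℝ) : Set ℝ :=
  { z : ℝ | ∃ mu : Finset M → ℝ,
      (∀ T : Finset M, 0 ≤ mu T) ∧
      (∑ T : Finset M, mu T = 1) ∧
      (∀ j : M, ∑ T ∈ Finset.univ.filter (fun T : Finset M => j ∈ T), mu T ≤ q) ∧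
      z = ∑ T : Finset M, mu T *
            ∑ i : Fin n, ∑ S : Finset M, lam i S * u i (S \ T) }

lemma gv_eq (u : Fin n → Finset M → ℝ) (q : ℝ) :
    gv u q = sSup { w : ℝ | ∃ lam : Fin n → Finset M → ℝ,
      IsFeas q lam ∧ w = sInf (Zset u q lam) } := by
  unfold gv
  congr 1
  ext w
  simp [Zset, IsFeas, and_assoc]


section facts
variable {u : Fin n → Finset M → ℝ} (hu0 : ∀ i S, 0 ≤ u i S)
include hu0

lemma lam_le_one {q : ℝ} {lam : Fin n → Finset M → ℝ} (h : IsFeas q lam)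
    (i : Fin n) (S : Finset M) : lam i S ≤ 1 := by
  refine le_trans ?_ (h.2.1 i)
  exact Finset.single_le_sum (fun T _ => h.1 i T) (Finset.mem_univ S)

lemma Val_le_B {q : ℝ} {lam : Fin n → Finset M → ℝ} (h : IsFeas q lam) :
    Val u lam ≤ B u := by
  refine Finset.sum_le_sum fun i _ => Finset.sum_le_sum fun S _ => ?_
  calc lam i S * u i S ≤ 1 * u i S :=
        mul_le_mul_of_nonneg_right (lam_le_one hu0 h i S) (hu0 i S)
    _ = u i S := one_mul _

lemma bddAbove_W (q : ℝ) :
    BddAbove { w : ℝ | ∃ lam : Fin n → Finset M → ℝ, IsFeas q lam ∧ w = Val u lam } := by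
  refine ⟨B u, fun w hw => ?_⟩
  obtain ⟨lam, hf, rfl⟩ := hw
  exact Val_le_B hu0 hf

lemma zero_feas {q : ℝ} (hq : 0 ≤ q) :
    IsFeas q (fun (_ : Fin n) (_ : Finset M) => (0:ℝ)) := by
  refine ⟨fun _ _ => le_refl _, fun i => by simp, fun j => ?_⟩
  simpa using hq

lemma W_nonempty {q : ℝ} (hq : 0 ≤ q) :
    Set.Nonempty { w : ℝ | ∃ lam : Fin n → Finset M → ℝ, IsFeas q lam ∧ w = Val u lam } :=
  ⟨Val u (fun _ _ => 0), fun _ _ => 0, zero_feas hu0 hq, rfl⟩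

lemma le_W {q : ℝ} {lam : Fin n → Finset M → ℝ} (h : IsFeas q lam) :
    Val u lam ≤ W u q :=
  le_csSup (bddAbove_W hu0 q) ⟨lam, h, rfl⟩

lemma W_le {q : ℝ} (hq : 0 ≤ q) {c : ℝ}
    (hc : ∀ lam : Fin n → Finset M → ℝ, IsFeas q lam → Val u lam ≤ c) :
    W u q ≤ c := by
  refine csSup_le (W_nonempty hu0 hq) ?_
  rintro w ⟨lam, hf, rfl⟩; exact hc lam hf

lemma bddAbove_OPT :
    BddAbove { w : ℝ | ∃ x : Fin n → Finset M,
      (∀ i k : Fin n, i ≠ k → Disjoint (x i) (x k)) ∧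
      w = ∑ i : Fin n, u i (x i) } := by
  refine ⟨B u, fun w hw => ?_⟩
  obtain ⟨x, hx, rfl⟩ := hw
  refine Finset.sum_le_sum fun i _ => ?_
  exact Finset.single_le_sum (f := fun S => u i S) (fun S _ => hu0 i S) (Finset.mem_univ (x i))

lemma alloc_le_OPT {x : Fin n → Finset M}
    (hx : ∀ i k : Fin n, i ≠ k → Disjoint (x i) (x k)) :
    ∑ i : Fin n, u i (x i) ≤ OPT u :=
  le_csSup (bddAbove_OPT hu0) ⟨x, hx, rfl⟩

lemma OPT_nonneg (hu_empty : ∀ i, u i ∅ = 0) : 0 ≤ OPT u := by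
  have h := alloc_le_OPT hu0 (x := fun _ => (∅ : Finset M))
    (fun i k _ => by simp)
  simpa [hu_empty] using h

lemma singleton_le_OPT (hu_empty : ∀ i, u i ∅ = 0) (i₀ : Fin n) (j : M) :
    u i₀ {j} ≤ OPT u := by
  have h := alloc_le_OPT hu0 (x := fun i => if i = i₀ then {j} else ∅) ?_
  · simp only [apply_ite (u _)] at h
    simpa [Finset.sum_ite_eq, hu_empty] using h
  · intro i k hik
    rcases eq_or_ne i i₀ with rfl | hi
    · simp [Ne.symm hik, Finset.disjoint_right]
    · simp [hi]

/-- `OPT ≤ 2 W(1/2)`. -/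
lemma OPT_le_two_W : OPT u ≤ 2 * W u (1/2) := by
  refine csSup_le ⟨∑ i : Fin n, u i ∅, fun _ => (∅ : Finset M), fun i k _ => by simp, rfl⟩ ?_
  rintro w ⟨x, hx, rfl⟩
  set lam : Fin n → Finset M → ℝ := fun i S => if S = x i then (1/2 : ℝ) else 0 with hlam
  have hfeas : IsFeas (1/2 : ℝ) lam := by
    refine ⟨fun i S => by dsimp [lam]; positivity, fun i => by simp only [lam, Finset.sum_ite_eq', Finset.mem_univ, if_true]; norm_num, ?_⟩
    intro j
    have hterm : ∀ i : Fin n,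
        ∑ S ∈ Finset.univ.filter (fun S : Finset M => j ∈ S), lam i S
          = if j ∈ x i then (1/2 : ℝ) else 0 := by
      intro i
      rw [Finset.sum_filter]
      simp only [hlam]
      rw [Finset.sum_congr rfl (fun S _ => ?_), Finset.sum_ite_eq' Finset.univ (x i)
        (fun S => if j ∈ S then (1:ℝ)/2 else 0)]
      · simp
      · split_ifs with h1 h2 h2 <;> simp_all
    rw [Finset.sum_congr rfl fun i _ => hterm i]
    by_cases hex : ∃ i₀ : Fin n, j ∈ x i₀
    · obtain ⟨i₀, hi₀⟩ := hex
      rw [Finset.sum_eq_single_of_mem i₀ (Finset.mem_univ i₀)]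
      · simp [hi₀]
      · intro i _ hii
        have : j ∉ x i := fun hj => (Finset.disjoint_left.mp (hx i i₀ hii)) hj hi₀
        simp [this]
    · push_neg at hex
      simp [hex]
  have hval : Val u lam = (1/2 : ℝ) * ∑ i : Fin n, u i (x i) := by
    simp only [Val, hlam, ite_mul, zero_mul, Finset.sum_ite_eq', Finset.mem_univ, if_true,
      Finset.mul_sum]
  have := le_W hu0 hfeas
  rw [hval] at this
  linarith

/-- subadditive valuations are below the sum of singletons -/
lemma le_sum_singletons (hu_empty : ∀ i, u i ∅ = 0)
    (hsub : ∀ i, ∀ S T : Finset M, u i (S ∪ T) ≤ u i S + u i T)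
    (i : Fin n) (S : Finset M) : u i S ≤ ∑ j ∈ S, u i {j} := by
  classical
  induction S using Finset.induction_on with
  | empty => simp [hu_empty]
  | insert a s ha ih =>
      rw [Finset.sum_insert ha]
      calc u i (insert a s) = u i ({a} ∪ s) := by rw [Finset.insert_eq]
        _ ≤ u i {a} + u i s := hsub i {a} s
        _ ≤ u i {a} + ∑ j ∈ s, u i {j} := by linarith

/-- at very small `q`, fractional welfare is tiny. -/
lemma W_le_small (hu_empty : ∀ i, u i ∅ = 0)
    (hsub : ∀ i, ∀ S T : Finset M, u i (S ∪ T) ≤ u i S + u i T)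
    {q : ℝ} (hq : 0 ≤ q) :
    W u q ≤ q * (Fintype.card M : ℝ) * OPT u := by
  refine W_le hu0 hq fun lam hf => ?_
  have step1 : Val u lam ≤ ∑ i : Fin n, ∑ S : Finset M, ∑ j ∈ S, lam i S * OPT u := by
    refine Finset.sum_le_sum fun i _ => Finset.sum_le_sum fun S _ => ?_
    rw [← Finset.mul_sum]
    refine le_trans (mul_le_mul_of_nonneg_left (le_sum_singletons hu0 hu_empty hsub i S) (hf.1 i S)) ?_
    refine mul_le_mul_of_nonneg_left ?_ (hf.1 i S)
    exact Finset.sum_le_sum fun j _ => singleton_le_OPT hu0 hu_empty i j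
  have swap : ∀ f : Finset M → ℝ,
      ∑ S : Finset M, ∑ _j ∈ S, f S
        = ∑ j : M, ∑ S ∈ Finset.univ.filter (fun S : Finset M => j ∈ S), f S := by
    intro f
    simp only [Finset.sum_filter]
    rw [Finset.sum_comm]
    refine Finset.sum_congr rfl fun S _ => ?_
    rw [Finset.sum_ite_mem, Finset.univ_inter]
  have step2 : ∑ i : Fin n, ∑ S : Finset M, ∑ _j ∈ S, lam i S * OPT u
      = ∑ j : M, (∑ i : Fin n, ∑ S ∈ Finset.univ.filter (fun S : Finset M => j ∈ S), lam i S) * OPT u := by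
    rw [Finset.sum_congr rfl fun i _ => swap (fun S => lam i S * OPT u), Finset.sum_comm]
    refine Finset.sum_congr rfl fun j _ => ?_
    rw [Finset.sum_mul]
    exact Finset.sum_congr rfl fun i _ => (Finset.sum_mul _ _ _).symm
  refine le_trans (le_trans step1 (le_of_eq step2)) ?_
  have hO := OPT_nonneg hu0 hu_empty
  calc ∑ j : M, (∑ i : Fin n, ∑ S ∈ Finset.univ.filter (fun S : Finset M => j ∈ S), lam i S) * OPT u
      ≤ ∑ _j : M, q * OPT u :=
        Finset.sum_le_sum fun j _ => mul_le_mul_of_nonneg_right (hf.2.2 j) hO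
    _ = q * (Fintype.card M : ℝ) * OPT u := by
        rw [Finset.sum_const, Finset.card_univ, nsmul_eq_mul]; ring

lemma bddBelow_Z {q : ℝ} {lam : Fin n → Finset M → ℝ} (hlam : ∀ i S, 0 ≤ lam i S) :
    BddBelow (Zset u q lam) := by
  refine ⟨0, ?_⟩
  rintro z ⟨mu, hmu0, hmu1, hmuq, rfl⟩
  refine Finset.sum_nonneg fun T _ => mul_nonneg (hmu0 T) ?_
  exact Finset.sum_nonneg fun i _ => Finset.sum_nonneg fun S _ =>
    mul_nonneg (hlam i S) (hu0 i (S \ T))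

lemma val_mem_Z {q : ℝ} (hq : 0 ≤ q) (lam : Fin n → Finset M → ℝ) :
    Val u lam ∈ Zset u q lam := by
  refine ⟨fun T => if T = (∅ : Finset M) then (1:ℝ) else 0, fun T => by positivity,
    by simp, fun j => ?_, ?_⟩
  · refine le_trans (le_of_eq (Finset.sum_eq_zero ?_)) hq
    intro T hT
    rw [Finset.mem_filter] at hT
    rw [if_neg]
    rintro rfl
    exact absurd hT.2 (by simp)
  · simp [ite_mul, Finset.sum_ite_eq', Val]

lemma sInf_Z_le_gv {q : ℝ} (hq : 0 ≤ q) {lam : Fin n → Finset M → ℝ}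
    (h : IsFeas q lam) : sInf (Zset u q lam) ≤ gv u q := by
  rw [gv_eq]
  refine le_csSup ⟨B u, ?_⟩ ⟨lam, h, rfl⟩
  rintro w ⟨lam', h', rfl⟩
  refine le_trans (csInf_le (bddBelow_Z hu0 h'.1) (val_mem_Z hu0 hq lam')) ?_
  exact Val_le_B hu0 h'

/-- The key recursion `W(q) ≤ g(q) + W(q²)`. -/
lemma W_le_gv_add (hsub : ∀ i, ∀ S T : Finset M, u i (S ∪ T) ≤ u i S + u i T)
    {q : ℝ} (hq : 0 ≤ q) : W u q ≤ gv u q + W u (q * q) := by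
  refine W_le hu0 hq fun lam hf => ?_
  have main : Val u lam - W u (q * q) ≤ sInf (Zset u q lam) := by
    refine le_csInf ⟨Val u lam, val_mem_Z hu0 hq lam⟩ ?_
    rintro z ⟨mu, hmu0, hmu1, hmuq, rfl⟩
    -- the composed weights
    set lam2 : Fin n → Finset M → ℝ :=
      fun i U => ∑ S : Finset M, ∑ T : Finset M,
        (if S ∩ T = U then lam i S * mu T else 0) with hlam2
    have hswap : ∀ (f : Finset M → Finset M → Finset M → ℝ),
        ∑ U : Finset M, ∑ S : Finset M, ∑ T : Finset M, f U S T
          = ∑ S : Finset M, ∑ T : Finset M, ∑ U : Finset M, f U S T := by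
      intro f
      rw [Finset.sum_comm]
      exact Finset.sum_congr rfl fun S _ => Finset.sum_comm
    have h2nonneg : ∀ i U, 0 ≤ lam2 i U := by
      intro i U
      refine Finset.sum_nonneg fun S _ => Finset.sum_nonneg fun T _ => ?_
      split_ifs
      · exact mul_nonneg (hf.1 i S) (hmu0 T)
      · exact le_refl 0
    have h2sum : ∀ i, ∑ U : Finset M, lam2 i U ≤ 1 := by
      intro i
      rw [show ∑ U : Finset M, lam2 i U
          = ∑ S : Finset M, ∑ T : Finset M, ∑ U : Finset M,
              (if S ∩ T = U then lam i S * mu T else 0) from hswap _]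
      calc ∑ S : Finset M, ∑ T : Finset M, ∑ U : Finset M,
              (if S ∩ T = U then lam i S * mu T else 0)
          = ∑ S : Finset M, ∑ T : Finset M, lam i S * mu T := by
            refine Finset.sum_congr rfl fun S _ => Finset.sum_congr rfl fun T _ => ?_
            simp [Finset.sum_ite_eq]
        _ = ∑ S : Finset M, lam i S * ∑ T : Finset M, mu T := by
            refine Finset.sum_congr rfl fun S _ => (Finset.mul_sum _ _ _).symm
        _ = ∑ S : Finset M, lam i S := by rw [hmu1]; simp
        _ ≤ 1 := hf.2.1 i
    have h2marg : ∀ j : M, ∑ i : Fin n,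
        ∑ U ∈ Finset.univ.filter (fun U : Finset M => j ∈ U), lam2 i U ≤ q * q := by
      intro j
      have hib : ∀ i : Fin n,
          ∑ U ∈ Finset.univ.filter (fun U : Finset M => j ∈ U), lam2 i U
            = (∑ S ∈ Finset.univ.filter (fun S : Finset M => j ∈ S), lam i S)
              * (∑ T ∈ Finset.univ.filter (fun T : Finset M => j ∈ T), mu T) := by
        intro i
        rw [Finset.sum_filter]
        have hA : ∀ U : Finset M, (if j ∈ U then lam2 i U else 0)
            = ∑ S : Finset M, ∑ T : Finset M,
                (if S ∩ T = U then (if j ∈ U then lam i S * mu T else 0) else 0) := by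
          intro U
          split_ifs with h
          · simp only [hlam2]
          · exact (Finset.sum_eq_zero fun S _ => Finset.sum_eq_zero fun T _ => by
              rw [ite_self]).symm
        rw [Finset.sum_congr rfl fun U _ => hA U, hswap]
        calc ∑ S : Finset M, ∑ T : Finset M, ∑ U : Finset M,
                (if S ∩ T = U then (if j ∈ U then lam i S * mu T else 0) else 0)
            = ∑ S : Finset M, ∑ T : Finset M,
                (if j ∈ S ∩ T then lam i S * mu T else 0) := by
              refine Finset.sum_congr rfl fun S _ => Finset.sum_congr rfl fun T _ => ?_
              simp [Finset.sum_ite_eq]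
          _ = ∑ S : Finset M, ∑ T : Finset M,
                (if j ∈ S then lam i S else 0) * (if j ∈ T then mu T else 0) := by
              refine Finset.sum_congr rfl fun S _ => Finset.sum_congr rfl fun T _ => ?_
              by_cases hS : j ∈ S <;> by_cases hT : j ∈ T <;>
                simp [Finset.mem_inter, hS, hT]
          _ = (∑ S ∈ Finset.univ.filter (fun S : Finset M => j ∈ S), lam i S)
              * (∑ T ∈ Finset.univ.filter (fun T : Finset M => j ∈ T), mu T) := by
              rw [Finset.sum_filter, Finset.sum_filter]
              exact (Finset.sum_mul_sum _ _ _ _).symm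
      rw [Finset.sum_congr rfl fun i _ => hib i, ← Finset.sum_mul]
      have hb0 : 0 ≤ ∑ T ∈ Finset.univ.filter (fun T : Finset M => j ∈ T), mu T :=
        Finset.sum_nonneg fun T _ => hmu0 T
      have ha0 : 0 ≤ ∑ i : Fin n, ∑ S ∈ Finset.univ.filter (fun S : Finset M => j ∈ S), lam i S :=
        Finset.sum_nonneg fun i _ => Finset.sum_nonneg fun S _ => hf.1 i S
      exact mul_le_mul (hf.2.2 j) (hmuq j) hb0 hq
    have h2feas : IsFeas (q * q) lam2 := ⟨h2nonneg, h2sum, h2marg⟩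
    have h2val : Val u lam2
        = ∑ T : Finset M, mu T * ∑ i : Fin n, ∑ S : Finset M, lam i S * u i (S ∩ T) := by
      calc Val u lam2
          = ∑ i : Fin n, ∑ U : Finset M, ∑ S : Finset M, ∑ T : Finset M,
              (if S ∩ T = U then lam i S * mu T * u i U else 0) := by
            refine Finset.sum_congr rfl fun i _ => Finset.sum_congr rfl fun U _ => ?_
            rw [Finset.sum_mul]
            refine Finset.sum_congr rfl fun S _ => ?_
            rw [Finset.sum_mul]
            refine Finset.sum_congr rfl fun T _ => ?_
            rw [ite_mul, zero_mul]
        _ = ∑ i : Fin n, ∑ S : Finset M, ∑ T : Finset M,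
              lam i S * mu T * u i (S ∩ T) := by
            refine Finset.sum_congr rfl fun i _ => ?_
            rw [hswap]
            refine Finset.sum_congr rfl fun S _ => Finset.sum_congr rfl fun T _ => ?_
            simp [Finset.sum_ite_eq]
        _ = ∑ T : Finset M, ∑ i : Fin n, ∑ S : Finset M,
              lam i S * mu T * u i (S ∩ T) := by
            refine Eq.trans (Finset.sum_congr rfl fun i _ => Finset.sum_comm) ?_
            exact Finset.sum_comm
        _ = ∑ T : Finset M, mu T * ∑ i : Fin n, ∑ S : Finset M, lam i S * u i (S ∩ T) := by
            refine Finset.sum_congr rfl fun T _ => ?_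
            rw [Finset.mul_sum]
            refine Finset.sum_congr rfl fun i _ => ?_
            rw [Finset.mul_sum]
            refine Finset.sum_congr rfl fun S _ => by ring
    have hI_le : Val u lam2 ≤ W u (q * q) := le_W hu0 h2feas
    -- lower bound z by Val - intersection term
    have hz : Val u lam - Val u lam2
        ≤ ∑ T : Finset M, mu T *
            ∑ i : Fin n, ∑ S : Finset M, lam i S * u i (S \ T) := by
      have hTterm : ∀ T : Finset M,
          ∑ i : Fin n, ∑ S : Finset M, lam i S * (u i S - u i (S ∩ T))
            ≤ ∑ i : Fin n, ∑ S : Finset M, lam i S * u i (S \ T) := by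
        intro T
        refine Finset.sum_le_sum fun i _ => Finset.sum_le_sum fun S _ => ?_
        refine mul_le_mul_of_nonneg_left ?_ (hf.1 i S)
        have := hsub i (S \ T) (S ∩ T)
        rw [Finset.sdiff_union_inter] at this
        linarith
      have hexp : ∑ T : Finset M, mu T *
          (∑ i : Fin n, ∑ S : Finset M, lam i S * (u i S - u i (S ∩ T)))
            = Val u lam - Val u lam2 := by
        have hinner : ∀ T : Finset M,
            ∑ i : Fin n, ∑ S : Finset M, lam i S * (u i S - u i (S ∩ T))
              = Val u lam - ∑ i : Fin n, ∑ S : Finset M, lam i S * u i (S ∩ T) := by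
          intro T
          simp [Val, mul_sub, Finset.sum_sub_distrib]
        rw [Finset.sum_congr rfl fun T _ => by rw [hinner T]]
        rw [Finset.sum_congr rfl fun T _ => mul_sub (mu T) _ _]
        rw [Finset.sum_sub_distrib, ← Finset.sum_mul, hmu1, one_mul, h2val]
      calc Val u lam - Val u lam2
          = ∑ T : Finset M, mu T *
              (∑ i : Fin n, ∑ S : Finset M, lam i S * (u i S - u i (S ∩ T))) := hexp.symm
        _ ≤ ∑ T : Finset M, mu T *
              ∑ i : Fin n, ∑ S : Finset M, lam i S * u i (S \ T) :=
            Finset.sum_le_sum fun T _ =>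
              mul_le_mul_of_nonneg_left (hTterm T) (hmu0 T)
    linarith
  have := sInf_Z_le_gv hu0 hq hf
  linarith


/-- the doubly exponential sequence of thresholds. -/
noncomputable def qk (k : ℕ) : ℝ := ((2:ℝ) ^ (2 ^ k))⁻¹

omit hu0 in
lemma qk_pos (k : ℕ) : 0 < qk k := by unfold qk; positivity

omit hu0 in
lemma qk_sq (k : ℕ) : qk k * qk k = qk (k+1) := by
  unfold qk
  rw [← mul_inv, ← pow_add]
  congr 1
  rw [pow_succ]
  ring

lemma telescope (hsub : ∀ i, ∀ S T : Finset M, u i (S ∪ T) ≤ u i S + u i T)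
    (N : ℕ) :
    W u (qk 0) - W u (qk N) ≤ ∑ k ∈ Finset.range N, gv u (qk k) := by
  induction N with
  | zero => simp
  | succ N ih =>
      rw [Finset.sum_range_succ]
      have h := W_le_gv_add hu0 hsub (q := qk N) (qk_pos N).le
      rw [qk_sq] at h
      linarith

lemma pointwise (hm : 3 ≤ Fintype.card M)
    (hu_empty : ∀ i, u i ∅ = 0)
    (hsub : ∀ i, ∀ S T : Finset M, u i (S ∪ T) ≤ u i S + u i T) :
    (1/2 - 1/(Fintype.card M : ℝ)) * OPT u
      ≤ ∑ k ∈ Finset.range (Nat.clog 2 (Nat.clog 2 (Fintype.card M)) + 1),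
          gv u (qk k) := by
  set L := Nat.clog 2 (Nat.clog 2 (Fintype.card M)) with hLdef
  have hmR : (3:ℝ) ≤ (Fintype.card M : ℝ) := by exact_mod_cast hm
  have hmpos : (0:ℝ) < (Fintype.card M : ℝ) := by linarith
  have hO : 0 ≤ OPT u := OPT_nonneg hu0 hu_empty
  have h1 : OPT u ≤ 2 * W u (qk 0) := by
    have h : qk 0 = (1/2 : ℝ) := by norm_num [qk]
    rw [h]
    exact OPT_le_two_W hu0
  have h2 : W u (qk 0) - W u (qk (L+1)) ≤ ∑ k ∈ Finset.range (L+1), gv u (qk k) :=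
    telescope hu0 hsub (L+1)
  have h3 : W u (qk (L+1)) ≤ qk (L+1) * (Fintype.card M : ℝ) * OPT u :=
    W_le_small hu0 hu_empty hsub (qk_pos (L+1)).le
  have hnat : Fintype.card M ≤ 2 ^ 2 ^ L := by
    calc Fintype.card M ≤ 2 ^ Nat.clog 2 (Fintype.card M) :=
          Nat.le_pow_clog (by norm_num) _
      _ ≤ 2 ^ 2 ^ L :=
          Nat.pow_le_pow_right (by norm_num) (Nat.le_pow_clog (by norm_num) _)
  have hnatR : (Fintype.card M : ℝ) ≤ (2:ℝ) ^ 2 ^ L := by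
    calc (Fintype.card M : ℝ) ≤ ((2 ^ 2 ^ L : ℕ) : ℝ) := by exact_mod_cast hnat
      _ = (2:ℝ) ^ 2 ^ L := by push_cast; ring
  have hq4 : qk (L+1) ≤ ((Fintype.card M : ℝ) * (Fintype.card M : ℝ))⁻¹ := by
    rw [← qk_sq]
    unfold qk
    rw [← mul_inv]
    apply inv_anti₀ (by positivity)
    exact mul_le_mul hnatR hnatR hmpos.le (by positivity)
  have h4 : qk (L+1) * (Fintype.card M : ℝ) * OPT u ≤ (1/(Fintype.card M : ℝ)) * OPT u := by
    refine mul_le_mul_of_nonneg_right ?_ hO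
    calc qk (L+1) * (Fintype.card M : ℝ)
        ≤ ((Fintype.card M : ℝ) * (Fintype.card M : ℝ))⁻¹ * (Fintype.card M : ℝ) :=
          mul_le_mul_of_nonneg_right hq4 hmpos.le
      _ = 1/(Fintype.card M : ℝ) := by field_simp
  linarith

end facts

section expect
variable {n : ℕ} {V : Fin n → Type*} [∀ i, Fintype (V i)] (D : ∀ i, V i → ℝ)

lemma Expect_sum (N : ℕ) (F : ℕ → (∀ i, V i) → ℝ) :
    Expect D (fun t => ∑ k ∈ Finset.range N, F k t)
      = ∑ k ∈ Finset.range N, Expect D (F k) := by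
  unfold Expect
  simp_rw [Finset.mul_sum]
  exact Finset.sum_comm

lemma Expect_mono (h0 : ∀ i t, 0 ≤ D i t) {F G : (∀ i, V i) → ℝ}
    (h : ∀ t, F t ≤ G t) : Expect D F ≤ Expect D G :=
  Finset.sum_le_sum fun t _ => mul_le_mul_of_nonneg_left (h t)
    (Finset.prod_nonneg fun i _ => h0 i (t i))

lemma Expect_const_mul (c : ℝ) (F : (∀ i, V i) → ℝ) :
    Expect D (fun t => c * F t) = c * Expect D F := by
  unfold Expect
  rw [Finset.mul_sum]
  exact Finset.sum_congr rfl fun t _ => by ring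

end expect
end Stmt9

/-- **Existence of a good `q` in the Bayesian setting (Lemma 3.5 / B.1).**
With `ℓ = ⌈log₂⌈log₂ m⌉⌉` and `γ = (1/2 - 1/m)/(ℓ+1)`, there is a `k ≤ ℓ`
such that with `q = 2^{-2^k}`: `E_t[g^{v^t}(q)] ≥ γ · E_t[OPT(v^t)]`. -/
theorem stmt_9 {M : Type*} [Fintype M] [DecidableEq M] {n : ℕ}
    {V : Fin n → Type*} [∀ i, Fintype (V i)] [∀ i, Nonempty (V i)]
    (hm : 3 ≤ Fintype.card M)
    (D : ∀ i, V i → ℝ)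
    (hD0 : ∀ i t, 0 ≤ D i t) (hD1 : ∀ i, ∑ t : V i, D i t = 1)
    (v : ∀ i : Fin n, V i → Finset M → ℝ)
    (hnorm : ∀ i t, v i t ∅ = 0)
    (hmono : ∀ i t, ∀ S T : Finset M, S ⊆ T → v i t S ≤ v i t T)
    (hsub : ∀ i t, ∀ S T : Finset M, v i t (S ∪ T) ≤ v i t S + v i t T) :
    ∃ k : ℕ, k ≤ Nat.clog 2 (Nat.clog 2 (Fintype.card M)) ∧
      Expect D (fun t => gv (fun i => v i (t i)) (((2 : ℝ) ^ (2 ^ k))⁻¹)) ≥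
        ((1 / 2 - 1 / (Fintype.card M : ℝ)) /
            ((Nat.clog 2 (Nat.clog 2 (Fintype.card M)) : ℝ) + 1)) *
          Expect D (fun t => OPT (fun i => v i (t i))) := by
  classical
  set L := Nat.clog 2 (Nat.clog 2 (Fintype.card M)) with hLdef
  set γ : ℝ := (1 / 2 - 1 / (Fintype.card M : ℝ)) / ((L : ℝ) + 1) with hγ
  have hu0 : ∀ t : (∀ i, V i), ∀ i S, 0 ≤ v i (t i) S := by
    intro t i S
    have h := hmono i (t i) ∅ S (Finset.empty_subset S)
    rw [hnorm i (t i)] at h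
    exact h
  have hpoint : ∀ t : (∀ i, V i),
      (1/2 - 1/(Fintype.card M : ℝ)) * OPT (fun i => v i (t i))
        ≤ ∑ k ∈ Finset.range (L + 1), gv (fun i => v i (t i)) (Stmt9.qk k) :=
    fun t => Stmt9.pointwise (hu0 t) hm (fun i => hnorm i (t i))
      (fun i => hsub i (t i))
  by_contra hcon
  push_neg at hcon
  have hLpos : (0:ℝ) < (L:ℝ) + 1 := by positivity
  have hsum_lt : ∑ k ∈ Finset.range (L + 1),
        Expect D (fun t => gv (fun i => v i (t i)) (Stmt9.qk k))
      < ∑ k ∈ Finset.range (L + 1),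
        γ * Expect D (fun t => OPT (fun i => v i (t i))) := by
    refine Finset.sum_lt_sum_of_nonempty (by simp) fun k hk => ?_
    have hk' : k ≤ L := by
      have := Finset.mem_range.mp hk
      omega
    exact hcon k hk'
  have hle : (1/2 - 1/(Fintype.card M : ℝ)) *
        Expect D (fun t => OPT (fun i => v i (t i)))
      ≤ ∑ k ∈ Finset.range (L + 1),
        Expect D (fun t => gv (fun i => v i (t i)) (Stmt9.qk k)) := by
    calc (1/2 - 1/(Fintype.card M : ℝ)) *
          Expect D (fun t => OPT (fun i => v i (t i)))
        = Expect D (fun t => (1/2 - 1/(Fintype.card M : ℝ)) *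
            OPT (fun i => v i (t i))) :=
          (Stmt9.Expect_const_mul D _ _).symm
      _ ≤ Expect D (fun t => ∑ k ∈ Finset.range (L + 1),
            gv (fun i => v i (t i)) (Stmt9.qk k)) :=
          Stmt9.Expect_mono D hD0 hpoint
      _ = ∑ k ∈ Finset.range (L + 1),
            Expect D (fun t => gv (fun i => v i (t i)) (Stmt9.qk k)) :=
          Stmt9.Expect_sum D _ _
  have hconst : ∑ k ∈ Finset.range (L + 1),
        γ * Expect D (fun t => OPT (fun i => v i (t i)))
      = (1/2 - 1/(Fintype.card M : ℝ)) *
        Expect D (fun t => OPT (fun i => v i (t i))) := by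
    rw [Finset.sum_const, Finset.card_range, nsmul_eq_mul, hγ]
    push_cast
    field_simp
  linarith
end

section
/- Let M be a finite set of items, v_1,…,v_n : Finset M → ℝ normalized, monotone, subadditive valuations, and q ∈ [0,1]. Let λ = (λ¹,…,λⁿ) ∈ Γ(q), let u_1,…,u_n ≥ 0 and y_j ≥ 0 (j ∈ M) satisfy u_i + Σ_{j∈S} y_j ≥ v_i(S) for every i and every S ⊆ M, and set p_j := q·y_j. Then for every T ⊆ M: Σ_{i=1}^n Σ_{S⊆M} λⁱ_S · (v_i(S∖T) − Σ_{j∈S} p_j) + Σ_{j∈T} p_j ≥ Σ_{i=1}^n Σ_{S⊆M} λⁱ_S v_i(S) − ( Σ_{i=1}^n u_i + q² Σ_{j∈M} y_j ). -/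
lemma aux_swap {M : Type*} [Fintype M] [DecidableEq M] {n : ℕ}
    (lam : Fin n → Finset M → ℝ) (w : M → ℝ) (T : Finset M) :
    ∑ i : Fin n, ∑ S : Finset M, lam i S * ∑ j ∈ S ∩ T, w j
    = ∑ j ∈ T, (∑ i : Fin n,
        ∑ S ∈ Finset.univ.filter (fun S : Finset M => j ∈ S), lam i S) * w j := by
  have h1 : ∀ i : Fin n, ∑ S : Finset M, lam i S * ∑ j ∈ S ∩ T, w j
      = ∑ j ∈ T, (∑ S ∈ Finset.univ.filter (fun S : Finset M => j ∈ S), lam i S) * w j := by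
    intro i
    have h2 : ∀ S : Finset M, lam i S * ∑ j ∈ S ∩ T, w j
        = ∑ j ∈ T, if j ∈ S then lam i S * w j else 0 := by
      intro S
      rw [Finset.mul_sum, Finset.inter_comm, ← Finset.filter_mem_eq_inter,
        Finset.sum_filter]
    simp only [h2]
    rw [Finset.sum_comm]
    refine Finset.sum_congr rfl fun j _ => ?_
    rw [Finset.sum_filter, Finset.sum_mul]
    refine Finset.sum_congr rfl fun S _ => ?_
    by_cases h : j ∈ S <;> simp [h]
  simp only [h1]
  rw [Finset.sum_comm]
  refine Finset.sum_congr rfl fun j _ => ?_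
  rw [Finset.sum_mul]


/-- **Dual-price inequality (core of Claim 4.3, pointwise form).**
Let `λ ∈ Γ(q)`, let `(u, y)` be a feasible dual solution to the configuration
LP (i.e. `u_i + Σ_{j∈S} y_j ≥ v_i(S)` for all `i, S` with `u, y ≥ 0`), and
set `p_j = q·y_j`. Then for every `T ⊆ M`:
`Σ_i Σ_S λ^i_S (v_i(S \ T) - Σ_{j∈S} p_j) + Σ_{j∈T} p_j
  ≥ Σ_i Σ_S λ^i_S v_i(S) - (Σ_i u_i + q² Σ_j y_j)`. -/
theorem stmt_11 {M : Type*} [Fintype M] [DecidableEq M] {n : ℕ}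
    (v : Fin n → Finset M → ℝ)
    (hnorm : ∀ i, v i ∅ = 0)
    (hmono : ∀ i, ∀ S T : Finset M, S ⊆ T → v i S ≤ v i T)
    (hsub : ∀ i, ∀ S T : Finset M, v i (S ∪ T) ≤ v i S + v i T)
    (q : ℝ) (hq0 : 0 ≤ q) (hq1 : q ≤ 1)
    (lam : Fin n → Finset M → ℝ)
    (hlam0 : ∀ i, ∀ S : Finset M, 0 ≤ lam i S)
    (hlam1 : ∀ i, ∑ S : Finset M, lam i S ≤ 1)
    (hlamq : ∀ j : M, ∑ i : Fin n,
      ∑ S ∈ Finset.univ.filter (fun S : Finset M => j ∈ S), lam i S ≤ q)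
    (u : Fin n → ℝ) (y : M → ℝ)
    (hu : ∀ i, 0 ≤ u i) (hy : ∀ j, 0 ≤ y j)
    (hdual : ∀ i, ∀ S : Finset M, u i + ∑ j ∈ S, y j ≥ v i S) :
    ∀ T : Finset M,
      (∑ i : Fin n, ∑ S : Finset M,
          lam i S * (v i (S \ T) - ∑ j ∈ S, q * y j)) +
          ∑ j ∈ T, q * y j ≥
        (∑ i : Fin n, ∑ S : Finset M, lam i S * v i S) -
          ((∑ i : Fin n, u i) + q ^ 2 * ∑ j : M, y j) := by
  intro T
  -- generic bound on weighted sums via item capacities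
  have cap : ∀ T' : Finset M,
      ∑ i : Fin n, ∑ S : Finset M, lam i S * ∑ j ∈ S ∩ T', y j
        ≤ q * ∑ j ∈ T', y j := by
    intro T'
    rw [aux_swap, Finset.mul_sum]
    exact Finset.sum_le_sum fun j _ =>
      mul_le_mul_of_nonneg_right (hlamq j) (hy j)
  -- Step 1: per-agent value split
  have key1 : ∀ i, ∑ S : Finset M, lam i S * v i S ≤
      (∑ S : Finset M, lam i S * v i (S \ T)) + u i
      + ∑ S : Finset M, lam i S * ∑ j ∈ S ∩ T, y j := by
    intro i
    have hS : ∀ S : Finset M, lam i S * v i S ≤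
        lam i S * v i (S \ T) + lam i S * u i + lam i S * ∑ j ∈ S ∩ T, y j := by
      intro S
      have h1 : v i S ≤ v i (S \ T) + v i (S ∩ T) := by
        calc v i S = v i ((S \ T) ∪ (S ∩ T)) := by rw [Finset.sdiff_union_inter]
        _ ≤ _ := hsub i _ _
      have h2 : v i (S ∩ T) ≤ u i + ∑ j ∈ S ∩ T, y j := hdual i _
      calc lam i S * v i S
          ≤ lam i S * (v i (S \ T) + u i + ∑ j ∈ S ∩ T, y j) :=
            mul_le_mul_of_nonneg_left (by linarith) (hlam0 i S)
        _ = _ := by ring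
    calc ∑ S : Finset M, lam i S * v i S
        ≤ ∑ S : Finset M, (lam i S * v i (S \ T) + lam i S * u i
            + lam i S * ∑ j ∈ S ∩ T, y j) :=
          Finset.sum_le_sum fun S _ => hS S
      _ = (∑ S : Finset M, lam i S * v i (S \ T))
            + (∑ S : Finset M, lam i S) * u i
            + ∑ S : Finset M, lam i S * ∑ j ∈ S ∩ T, y j := by
          rw [Finset.sum_add_distrib, Finset.sum_add_distrib, Finset.sum_mul]
      _ ≤ _ := by
          have h3 : (∑ S : Finset M, lam i S) * u i ≤ 1 * u i :=
            mul_le_mul_of_nonneg_right (hlam1 i) (hu i)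
          rw [one_mul] at h3
          linarith
  have key1s : ∑ i : Fin n, ∑ S : Finset M, lam i S * v i S ≤
      (∑ i : Fin n, ∑ S : Finset M, lam i S * v i (S \ T)) + (∑ i : Fin n, u i)
      + ∑ i : Fin n, ∑ S : Finset M, lam i S * ∑ j ∈ S ∩ T, y j := by
    calc ∑ i : Fin n, ∑ S : Finset M, lam i S * v i S
        ≤ ∑ i : Fin n, ((∑ S : Finset M, lam i S * v i (S \ T)) + u i
            + ∑ S : Finset M, lam i S * ∑ j ∈ S ∩ T, y j) :=
          Finset.sum_le_sum fun i _ => key1 i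
      _ = _ := by rw [Finset.sum_add_distrib, Finset.sum_add_distrib]
  have key2 := cap T
  have key3 : ∑ i : Fin n, ∑ S : Finset M, lam i S * ∑ j ∈ S, y j
      ≤ q * ∑ j : M, y j := by
    have := cap Finset.univ
    simpa [Finset.inter_univ] using this
  have key3' : q * (∑ i : Fin n, ∑ S : Finset M, lam i S * ∑ j ∈ S, y j)
      ≤ q ^ 2 * ∑ j : M, y j := by
    have := mul_le_mul_of_nonneg_left key3 hq0
    nlinarith []
  have hsplit : ∑ i : Fin n, ∑ S : Finset M,
      lam i S * (v i (S \ T) - ∑ j ∈ S, q * y j)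
      = (∑ i : Fin n, ∑ S : Finset M, lam i S * v i (S \ T))
        - q * ∑ i : Fin n, ∑ S : Finset M, lam i S * ∑ j ∈ S, y j := by
    rw [Finset.mul_sum]
    rw [← Finset.sum_sub_distrib]
    refine Finset.sum_congr rfl fun i _ => ?_
    rw [Finset.mul_sum, ← Finset.sum_sub_distrib]
    refine Finset.sum_congr rfl fun S _ => ?_
    rw [← Finset.mul_sum]
    ring
  have hT : ∑ j ∈ T, q * y j = q * ∑ j ∈ T, y j := (Finset.mul_sum _ _ _).symm
  rw [hsplit, hT, ge_iff_le]
  linarith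
end

section
/- Let k ≥ 1 be a natural number and let M' be a finite set with |M'| = 2^k − 1. Then there exists a normalized, monotone, subadditive function f : Finset M' → ℝ such that: (1) f({j}) = 1 for every j ∈ M'; (2) f(M') ≥ k; and (3) for every d ∈ {0,1,…,k} there exists a nonempty finite family 𝒟 of subsets of M' such that every D ∈ 𝒟 has |D| = 2^d − 1 and f(M' ∖ D) ≤ k − d, and moreover there is a constant c_d such that every item j ∈ M' is contained in exactly c_d of the sets D ∈ 𝒟. -/
namespace Stmt14Aux
open Module

variable {k : ℕ}

/-- The set of achievable dimensions of subspaces avoiding `S`. -/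
def avoidSet (k : ℕ) (S : Set (GaloisField 2 k)) : Set ℕ :=
  {d | ∃ W : Submodule (ZMod 2) (GaloisField 2 k),
    finrank (ZMod 2) ↥W = d ∧ ∀ v ∈ S, v ∉ W}

noncomputable def dimAvoid (k : ℕ) (S : Set (GaloisField 2 k)) : ℕ :=
  sSup (avoidSet k S)

lemma mem_avoidSet_le (hk : k ≠ 0) {S : Set (GaloisField 2 k)} {d : ℕ}
    (hd : d ∈ avoidSet k S) : d ≤ k := by
  obtain ⟨W, hW, -⟩ := hd
  rw [← hW]
  exact W.finrank_le.trans (le_of_eq (GaloisField.finrank 2 hk))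

lemma avoidSet_bdd (hk : k ≠ 0) (S : Set (GaloisField 2 k)) :
    BddAbove (avoidSet k S) :=
  ⟨k, fun _ hd => mem_avoidSet_le hk hd⟩

lemma avoidSet_nonempty {S : Set (GaloisField 2 k)} (hS : (0 : GaloisField 2 k) ∉ S) :
    (avoidSet k S).Nonempty := by
  refine ⟨0, ⊥, finrank_bot _ _, fun v hv hmem => ?_⟩
  rw [Submodule.mem_bot] at hmem
  exact hS (hmem ▸ hv)

lemma dimAvoid_mem (hk : k ≠ 0) {S : Set (GaloisField 2 k)}
    (hS : (0 : GaloisField 2 k) ∉ S) : dimAvoid k S ∈ avoidSet k S :=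
  Nat.sSup_mem (avoidSet_nonempty hS) (avoidSet_bdd hk S)

lemma le_dimAvoid (hk : k ≠ 0) {S : Set (GaloisField 2 k)} {d : ℕ}
    (hd : d ∈ avoidSet k S) : d ≤ dimAvoid k S :=
  le_csSup (avoidSet_bdd hk S) hd

lemma dimAvoid_le (hk : k ≠ 0) {S : Set (GaloisField 2 k)}
    (hS : (0 : GaloisField 2 k) ∉ S) : dimAvoid k S ≤ k :=
  csSup_le (avoidSet_nonempty hS) (fun _ hd => mem_avoidSet_le hk hd)

lemma dimAvoid_antitone (hk : k ≠ 0) {S T : Set (GaloisField 2 k)}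
    (hT : (0 : GaloisField 2 k) ∉ T) (hST : S ⊆ T) :
    dimAvoid k T ≤ dimAvoid k S := by
  refine le_dimAvoid hk ?_
  obtain ⟨W, hW, hav⟩ := dimAvoid_mem hk hT
  exact ⟨W, hW, fun v hv => hav v (hST hv)⟩

lemma dimAvoid_empty (hk : k ≠ 0) : dimAvoid k (∅ : Set (GaloisField 2 k)) = k := by
  refine le_antisymm (csSup_le (avoidSet_nonempty (by simp))
    (fun _ hd => mem_avoidSet_le hk hd)) (le_dimAvoid hk ?_)
  exact ⟨⊤, by rw [finrank_top]; exact GaloisField.finrank 2 hk, by simp⟩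

lemma dimAvoid_singleton (hk : k ≠ 0) {v : GaloisField 2 k} (hv : v ≠ 0) :
    dimAvoid k {v} = k - 1 := by
  refine le_antisymm ?_ (le_dimAvoid hk ?_)
  · obtain ⟨W, hW, hav⟩ := dimAvoid_mem hk (S := {v}) (by simpa using fun h => hv h.symm)
    rw [← hW]
    have hWt : W < ⊤ := lt_top_iff_ne_top.mpr (fun h => hav v rfl (h ▸ Submodule.mem_top))
    have := Submodule.finrank_lt (K := ZMod 2) (V := GaloisField 2 k) hWt.ne
    rw [GaloisField.finrank 2 hk] at this
    omega
  · -- construct a hyperplane avoiding v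
    obtain ⟨φ, hφ⟩ : ∃ φ : Module.Dual (ZMod 2) (GaloisField 2 k), φ v ≠ 0 := by
      by_contra h
      push_neg at h
      exact hv ((Module.forall_dual_apply_eq_zero_iff (ZMod 2) v).mp h)
    refine ⟨LinearMap.ker φ, ?_, ?_⟩
    · have hsurj : Function.Surjective φ := by
        intro c
        refine ⟨(c * (φ v)⁻¹) • v, ?_⟩
        rw [map_smul]
        simp only [smul_eq_mul]
        field_simp
      have hr := LinearMap.finrank_range_add_finrank_ker φ
      rw [LinearMap.range_eq_top.mpr hsurj, finrank_top, finrank_self,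
        GaloisField.finrank 2 hk] at hr
      omega
    · intro w hw hmem
      rw [Set.mem_singleton_iff] at hw
      exact hφ (hw ▸ (LinearMap.mem_ker.mp hmem))

lemma dimAvoid_nonzero (hk : k ≠ 0) :
    dimAvoid k {v : GaloisField 2 k | v ≠ 0} = 0 := by
  refine Nat.le_zero.mp (csSup_le (avoidSet_nonempty (by simp)) ?_)
  rintro d ⟨W, hW, hav⟩
  have hWb : W = ⊥ := by
    rw [eq_bot_iff]
    intro x hx
    rw [Submodule.mem_bot]
    by_contra hx0
    exact hav x hx0 hx
  rw [← hW, hWb, finrank_bot]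

lemma dimAvoid_union (hk : k ≠ 0) {A B : Set (GaloisField 2 k)}
    (hA : (0 : GaloisField 2 k) ∉ A) (hB : (0 : GaloisField 2 k) ∉ B) :
    dimAvoid k A + dimAvoid k B ≤ k + dimAvoid k (A ∪ B) := by
  obtain ⟨WA, hWA, havA⟩ := dimAvoid_mem hk hA
  obtain ⟨WB, hWB, havB⟩ := dimAvoid_mem hk hB
  have hmem : finrank (ZMod 2) ↥(WA ⊓ WB) ∈ avoidSet k (A ∪ B) := by
    refine ⟨WA ⊓ WB, rfl, ?_⟩
    rintro v (hv | hv) hm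
    · exact havA v hv hm.1
    · exact havB v hv hm.2
  have hsup : finrank (ZMod 2) ↥(WA ⊔ WB) ≤ k :=
    (Submodule.finrank_le _).trans (le_of_eq (GaloisField.finrank 2 hk))
  have heq := Submodule.finrank_sup_add_finrank_inf_eq WA WB
  have := le_dimAvoid hk hmem
  omega

lemma exists_submodule (hk : k ≠ 0) {d : ℕ} (hd : d ≤ k) :
    ∃ W : Submodule (ZMod 2) (GaloisField 2 k), finrank (ZMod 2) ↥W = d := by
  have hrk : finrank (ZMod 2) (GaloisField 2 k) = k := GaloisField.finrank 2 hk
  let b := Module.finBasis (ZMod 2) (GaloisField 2 k)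
  have hdk : d ≤ finrank (ZMod 2) (GaloisField 2 k) := by rw [hrk]; exact hd
  let v : Fin d → GaloisField 2 k := fun i => b (Fin.castLE hdk i)
  refine ⟨Submodule.span (ZMod 2) (Set.range v), ?_⟩
  have hli : LinearIndependent (ZMod 2) v :=
    b.linearIndependent.comp _ (Fin.castLE_injective hdk)
  rw [finrank_span_eq_card hli, Fintype.card_fin]

end Stmt14Aux

open Stmt14Aux Module in
/-- **Set-cover integrality-gap valuation (Lemma 6.2).**
For `|M'| = 2^k - 1` with `k ≥ 1`, there is a normalized, monotone,
subadditive function `f` on subsets of `M'` with: (1) `f({j}) = 1` for all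
`j`; (2) `f(M') ≥ k`; and (3) for every `d ≤ k` there is a nonempty family
`𝒟` of subsets of `M'`, each of size `2^d - 1`, with `f(M' \ D) ≤ k - d`
for every `D ∈ 𝒟`, and such that every item lies in the same number of
members of `𝒟`. -/
theorem stmt_14 {M' : Type*} [Fintype M'] [DecidableEq M']
    (k : ℕ) (hk : 1 ≤ k) (hcard : Fintype.card M' = 2 ^ k - 1) :
    ∃ f : Finset M' → ℝ,
      f ∅ = 0 ∧
      (∀ S T : Finset M', S ⊆ T → f S ≤ f T) ∧
      (∀ S T : Finset M', f (S ∪ T) ≤ f S + f T) ∧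
      (∀ j : M', f {j} = 1) ∧
      f Finset.univ ≥ (k : ℝ) ∧
      ∀ d : ℕ, d ≤ k →
        ∃ 𝒟 : Finset (Finset M'),
          𝒟.Nonempty ∧
          (∀ D ∈ 𝒟, D.card = 2 ^ d - 1 ∧
            f (Finset.univ \ D) ≤ (k : ℝ) - (d : ℝ)) ∧
          ∃ c : ℕ, ∀ j : M',
            (𝒟.filter (fun D => j ∈ D)).card = c := by
  classical
  have hk0 : k ≠ 0 := by omega
  haveI : Fintype (GaloisField 2 k) := Fintype.ofFinite _
  have hcardF : Fintype.card (GaloisField 2 k) = 2 ^ k := by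
    rw [← Nat.card_eq_fintype_card]; exact GaloisField.card 2 k hk0
  have hcard' : Fintype.card {v : GaloisField 2 k // v ≠ 0} = 2 ^ k - 1 := by
    have h1 : Fintype.card {v : GaloisField 2 k // v = 0} = 1 := Fintype.card_subtype_eq 0
    have := Fintype.card_subtype_compl (fun v : GaloisField 2 k => v = 0)
    rw [h1, hcardF] at this
    simpa using this
  obtain ⟨e⟩ : Nonempty (M' ≃ {v : GaloisField 2 k // v ≠ 0}) :=
    ⟨Fintype.equivOfCardEq (by rw [hcard, hcard'])⟩
  -- image of a finset in the field
  set A : Finset M' → Set (GaloisField 2 k) :=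
    fun S => (fun j => (e j : GaloisField 2 k)) '' ↑S with hA
  have hA0 : ∀ S, (0 : GaloisField 2 k) ∉ A S := by
    rintro S ⟨j, -, hj⟩
    exact (e j).2 hj
  refine ⟨fun S => (k : ℝ) - (dimAvoid k (A S) : ℝ), ?_, ?_, ?_, ?_, ?_, ?_⟩
  · -- normalized
    show (k : ℝ) - (dimAvoid k (A ∅) : ℝ) = 0
    have : A ∅ = ∅ := by simp [hA]
    rw [this, dimAvoid_empty hk0]
    ring
  · -- monotone
    intro S T hST
    show (k : ℝ) - (dimAvoid k (A S) : ℝ) ≤ (k : ℝ) - (dimAvoid k (A T) : ℝ)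
    have : dimAvoid k (A T) ≤ dimAvoid k (A S) :=
      dimAvoid_antitone hk0 (hA0 T) (Set.image_mono (by exact_mod_cast hST))
    have := Nat.cast_le (α := ℝ) |>.mpr this
    linarith
  · -- subadditive
    intro S T
    show (k : ℝ) - (dimAvoid k (A (S ∪ T)) : ℝ) ≤
      ((k : ℝ) - (dimAvoid k (A S) : ℝ)) + ((k : ℝ) - (dimAvoid k (A T) : ℝ))
    have hU : A (S ∪ T) = A S ∪ A T := by
      simp [hA, Finset.coe_union, Set.image_union]
    have h1 : dimAvoid k (A S) + dimAvoid k (A T) ≤ k + dimAvoid k (A (S ∪ T)) := by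
      rw [hU]; exact dimAvoid_union hk0 (hA0 S) (hA0 T)
    have h2 := Nat.cast_le (α := ℝ) |>.mpr h1
    push_cast at h2
    linarith
  · -- singletons
    intro j
    show (k : ℝ) - (dimAvoid k (A {j}) : ℝ) = 1
    have h1 : A {j} = {(e j : GaloisField 2 k)} := by simp [hA]
    rw [h1, dimAvoid_singleton hk0 (e j).2]
    have : ((k - 1 : ℕ) : ℝ) = (k : ℝ) - 1 := by
      rw [Nat.cast_sub hk]; simp
    rw [this]; ring
  · -- full value
    show (k : ℝ) - (dimAvoid k (A Finset.univ) : ℝ) ≥ (k : ℝ)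
    have h1 : A Finset.univ = {v : GaloisField 2 k | v ≠ 0} := by
      ext v
      constructor
      · rintro ⟨j, -, hj⟩; exact hj ▸ (e j).2
      · intro hv; exact ⟨e.symm ⟨v, hv⟩, Finset.mem_coe.mpr (Finset.mem_univ _), by simp⟩
    rw [h1, dimAvoid_nonzero hk0]
    simp
  · -- the families
    intro d hd
    set TW : Submodule (ZMod 2) (GaloisField 2 k) → Finset M' :=
      fun W => Finset.univ.filter (fun j => (e j : GaloisField 2 k) ∈ W) with hTW
    set 𝒟 : Finset (Finset M') :=
      Finset.univ.filter (fun D : Finset M' =>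
        ∃ W : Submodule (ZMod 2) (GaloisField 2 k),
          finrank (ZMod 2) ↥W = d ∧ D = TW W) with h𝒟
    refine ⟨𝒟, ?_, ?_, ?_⟩
    · obtain ⟨W0, hW0⟩ := exists_submodule hk0 hd
      exact ⟨TW W0, Finset.mem_filter.mpr ⟨Finset.mem_univ _, W0, hW0, rfl⟩⟩
    · rintro D hD
      obtain ⟨-, W, hWd, rfl⟩ := Finset.mem_filter.mp hD
      constructor
      · -- cardinality
        have hcardW : Nat.card ↥W = 2 ^ d := by
          haveI : Fintype ↥W := Fintype.ofFinite _
          rw [Nat.card_eq_fintype_card]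
          have := card_eq_pow_finrank (K := ZMod 2) (V := ↥W)
          rwa [ZMod.card, hWd] at this
        set NW : Finset (GaloisField 2 k) :=
          Finset.univ.filter (fun v => v ∈ W ∧ v ≠ 0) with hNW
        have h2 : (TW W).card = NW.card := by
          refine Finset.card_bij (fun j _ => (e j : GaloisField 2 k)) ?_ ?_ ?_
          · intro j hj
            rw [hTW] at hj
            exact Finset.mem_filter.mpr ⟨Finset.mem_univ _,
              (Finset.mem_filter.mp hj).2, (e j).2⟩
          · intro a ha b hb hab
            exact e.injective (Subtype.ext hab)
          · intro v hv
            obtain ⟨-, hvW, hv0⟩ := Finset.mem_filter.mp hv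
            refine ⟨e.symm ⟨v, hv0⟩, ?_, by simp⟩
            rw [hTW]
            refine Finset.mem_filter.mpr ⟨Finset.mem_univ _, ?_⟩
            simpa using hvW
        have h3 : NW = (Finset.univ.filter (fun v : GaloisField 2 k => v ∈ W)) \ {0} := by
          ext v
          simp [hNW, and_comm]
        have h4 : (Finset.univ.filter (fun v : GaloisField 2 k => v ∈ W)).card = 2 ^ d := by
          have h4' := Fintype.card_subtype (fun v : GaloisField 2 k => v ∈ W)
          rw [← hcardW, Nat.card_eq_fintype_card]
          exact h4'.symm
        have h5 : ({0} : Finset (GaloisField 2 k)) ⊆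
            Finset.univ.filter (fun v : GaloisField 2 k => v ∈ W) := by
          intro v hv
          rw [Finset.mem_singleton] at hv
          exact Finset.mem_filter.mpr ⟨Finset.mem_univ _, hv ▸ W.zero_mem⟩
        rw [h2, h3, Finset.card_sdiff_of_subset h5, h4, Finset.card_singleton]
      · -- value on complement
        have hmem : (d : ℕ) ∈ avoidSet k (A (Finset.univ \ TW W)) := by
          refine ⟨W, hWd, ?_⟩
          rintro v ⟨j, hj, rfl⟩
          rw [Finset.mem_coe, Finset.mem_sdiff] at hj
          intro hmem
          exact hj.2 (Finset.mem_filter.mpr ⟨Finset.mem_univ _, hmem⟩)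
        show (k : ℝ) - (dimAvoid k (A (Finset.univ \ TW W)) : ℝ) ≤ (k : ℝ) - (d : ℝ)
        have := Nat.cast_le (α := ℝ) |>.mpr (le_dimAvoid hk0 hmem)
        linarith
    · -- regularity
      have hne : Nonempty M' := by
        rw [← Fintype.card_pos_iff, hcard]
        have : 1 ≤ 2 ^ k := Nat.one_le_two_pow
        have : 2 ^ 1 ≤ 2 ^ k := Nat.pow_le_pow_right (by norm_num) hk
        omega
      obtain ⟨j₀⟩ := hne
      refine ⟨(𝒟.filter (fun D => j₀ ∈ D)).card, fun j => ?_⟩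
      set Φ : (u : GaloisField 2 k) → u ≠ 0 → M' → M' :=
        fun u hu a => e.symm ⟨u * (e a : GaloisField 2 k), mul_ne_zero hu (e a).2⟩ with hΦ
      have hΦapp : ∀ (u : GaloisField 2 k) (hu : u ≠ 0) (a : M'),
          ((e (Φ u hu a)) : GaloisField 2 k) = u * (e a : GaloisField 2 k) := by
        intro u hu a
        rw [hΦ]
        simp
      have hΦcancel : ∀ (u u' : GaloisField 2 k) (hu : u ≠ 0) (hu' : u' ≠ 0),
          u' * u = 1 → ∀ a : M', Φ u' hu' (Φ u hu a) = a := by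
        intro u u' hu hu' h a
        apply e.injective
        apply Subtype.ext
        rw [hΦapp u' hu', hΦapp u hu, ← mul_assoc, h, one_mul]
      have hΦD : ∀ (u : GaloisField 2 k) (hu : u ≠ 0), ∀ D ∈ 𝒟,
          D.image (Φ u hu) ∈ 𝒟 := by
        intro u hu D hD
        obtain ⟨-, W, hWd, rfl⟩ := Finset.mem_filter.mp hD
        let g : GaloisField 2 k ≃ₗ[ZMod 2] GaloisField 2 k :=
          { toFun := fun v => u * v
            map_add' := mul_add u
            map_smul' := fun c v => by simp [mul_smul_comm]
            invFun := fun v => u⁻¹ * v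
            left_inv := fun v => inv_mul_cancel_left₀ hu v
            right_inv := fun v => mul_inv_cancel_left₀ hu v }
        refine Finset.mem_filter.mpr ⟨Finset.mem_univ _,
          W.map (g : GaloisField 2 k →ₗ[ZMod 2] GaloisField 2 k), ?_, ?_⟩
        · rw [LinearEquiv.finrank_map_eq]; exact hWd
        · ext a
          simp only [Finset.mem_image, hTW, Finset.mem_filter, Finset.mem_univ, true_and,
            Submodule.mem_map]
          constructor
          · rintro ⟨b, hb, rfl⟩
            exact ⟨(e b : GaloisField 2 k), hb, (hΦapp u hu b).symm⟩
          · rintro ⟨w, hw, hwa⟩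
            have hw0 : w ≠ 0 := by
              intro h0
              apply (e a).2
              rw [← hwa, h0]
              show u * 0 = 0
              ring
            refine ⟨e.symm ⟨w, hw0⟩, ?_, ?_⟩
            · simpa using hw
            · apply e.injective
              apply Subtype.ext
              rw [hΦapp u hu]
              simp only [Equiv.apply_symm_apply]
              exact hwa
      have hu₁ : ((e j : GaloisField 2 k) * (e j₀ : GaloisField 2 k)⁻¹) ≠ 0 :=
        mul_ne_zero (e j).2 (inv_ne_zero (e j₀).2)
      set u₁ : GaloisField 2 k := (e j : GaloisField 2 k) * (e j₀ : GaloisField 2 k)⁻¹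
        with hu₁def
      have hu₂ : u₁⁻¹ ≠ 0 := inv_ne_zero hu₁
      have hj₀j : Φ u₁⁻¹ hu₂ j = j₀ := by
        apply e.injective
        apply Subtype.ext
        rw [hΦapp u₁⁻¹ hu₂, hu₁def, mul_inv_rev, inv_inv, mul_assoc,
          inv_mul_cancel₀ (e j).2, mul_one]
      have hjj₀ : Φ u₁ hu₁ j₀ = j := by
        apply e.injective
        apply Subtype.ext
        rw [hΦapp u₁ hu₁, hu₁def, mul_assoc, inv_mul_cancel₀ (e j₀).2, mul_one]
      refine Finset.card_bij' (fun D _ => D.image (Φ u₁⁻¹ hu₂))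
        (fun D _ => D.image (Φ u₁ hu₁)) ?_ ?_ ?_ ?_
      · intro D hD
        obtain ⟨hD𝒟, hjD⟩ := Finset.mem_filter.mp hD
        refine Finset.mem_filter.mpr ⟨hΦD u₁⁻¹ hu₂ D hD𝒟, ?_⟩
        rw [← hj₀j]
        exact Finset.mem_image_of_mem _ hjD
      · intro D hD
        obtain ⟨hD𝒟, hjD⟩ := Finset.mem_filter.mp hD
        refine Finset.mem_filter.mpr ⟨hΦD u₁ hu₁ D hD𝒟, ?_⟩
        rw [← hjj₀]
        exact Finset.mem_image_of_mem _ hjD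
      · intro D hD
        show Finset.image (Φ u₁ hu₁) (Finset.image (Φ u₁⁻¹ hu₂) D) = D
        rw [Finset.image_image]
        exact (Finset.image_congr
          (fun a _ => hΦcancel _ _ hu₂ hu₁ (mul_inv_cancel₀ hu₁) a)).trans Finset.image_id
      · intro D hD
        show Finset.image (Φ u₁⁻¹ hu₂) (Finset.image (Φ u₁ hu₁) D) = D
        rw [Finset.image_image]
        exact (Finset.image_congr
          (fun a _ => hΦcancel _ _ hu₁ hu₂ (inv_mul_cancel₀ hu₁) a)).trans Finset.image_id
end

section
/- Let M be a finite set of m items, and for each i ∈ {1,…,n} let V_i be a finite nonempty type, D_i a probability mass function on V_i, and v_i^t : Finset M → ℝ a normalized, monotone, subadditive valuation for each t ∈ V_i. Then for every q ∈ [0,1]: sup_{{λ^t}∈Λ(q)} inf_{μ∈Δ_M(q)} Σ_{T⊆M} μ_T · E_t[ Σ_{i=1}^n Σ_{S⊆M} λ^{i,t}_S v_i^{t_i}(S∖T) ] ≥ E_t[ g^{v^t}(q) ], where the expectations are over t_i ∼ D_i drawn independently and v^t = (v_1^{t_1},…,v_n^{t_n}). -/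
/-- The point mass on the empty bundle. -/
noncomputable def muZero (M : Type*) [Fintype M] [DecidableEq M] : Finset M → ℝ :=
  fun T => if T = ∅ then 1 else 0

lemma muZero_nonneg {M : Type*} [Fintype M] [DecidableEq M] (T : Finset M) :
    0 ≤ muZero M T := by
  unfold muZero; split <;> norm_num

lemma muZero_sum {M : Type*} [Fintype M] [DecidableEq M] :
    ∑ T : Finset M, muZero M T = 1 := by
  simp [muZero]

lemma muZero_col {M : Type*} [Fintype M] [DecidableEq M] {q : ℝ} (hq0 : 0 ≤ q) (j : M) :
    ∑ T ∈ Finset.univ.filter (fun T : Finset M => j ∈ T), muZero M T ≤ q := by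
  have h0 : ∑ T ∈ Finset.univ.filter (fun T : Finset M => j ∈ T), muZero M T = 0 := by
    apply Finset.sum_eq_zero
    intro T hT
    simp only [Finset.mem_filter, Finset.mem_univ, true_and] at hT
    have hTne : T ≠ ∅ := Finset.ne_empty_of_mem hT
    simp [muZero, hTne]
  rw [h0]; exact hq0

/-- **The Bayesian game value dominates the expected full-information value.**
For every `q ∈ [0,1]`:
`sup_{λ∈Λ(q)} inf_{μ∈Δ_M(q)} Σ_T μ_T E_t[Σ_i Σ_S λ^{i,t}_S v_i^{t_i}(S \ T)]
  ≥ E_t[g^{v^t}(q)]`. -/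
theorem stmt_15 {M : Type*} [Fintype M] [DecidableEq M] {n : ℕ}
    {V : Fin n → Type*} [∀ i, Fintype (V i)] [∀ i, Nonempty (V i)]
    (D : ∀ i, V i → ℝ)
    (hD0 : ∀ i t, 0 ≤ D i t) (hD1 : ∀ i, ∑ t : V i, D i t = 1)
    (v : ∀ i : Fin n, V i → Finset M → ℝ)
    (hnorm : ∀ i t, v i t ∅ = 0)
    (hmono : ∀ i t, ∀ S T : Finset M, S ⊆ T → v i t S ≤ v i t T)
    (hsub : ∀ i t, ∀ S T : Finset M, v i t (S ∪ T) ≤ v i t S + v i t T)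
    (q : ℝ) (hq0 : 0 ≤ q) (hq1 : q ≤ 1) :
    sSup { w : ℝ | ∃ lam : Fin n → (∀ i, V i) → Finset M → ℝ,
      (∀ i t, ∀ S : Finset M, 0 ≤ lam i t S) ∧
      (∀ i t, ∑ S : Finset M, lam i t S ≤ 1) ∧
      (∀ j : M,
        Expect D (fun t => ∑ i : Fin n,
          ∑ S ∈ Finset.univ.filter (fun S : Finset M => j ∈ S), lam i t S) ≤ q) ∧
      w = sInf { z : ℝ | ∃ mu : Finset M → ℝ,
        (∀ T : Finset M, 0 ≤ mu T) ∧
        (∑ T : Finset M, mu T = 1) ∧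
        (∀ j : M,
          ∑ T ∈ Finset.univ.filter (fun T : Finset M => j ∈ T), mu T ≤ q) ∧
        z = ∑ T : Finset M, mu T *
              Expect D (fun t => ∑ i : Fin n, ∑ S : Finset M,
                lam i t S * v i (t i) (S \ T)) } } ≥
      Expect D (fun t => gv (fun i => v i (t i)) q) := by
  classical
  have hv0 : ∀ i t S, 0 ≤ v i t S := by
    intro i t S
    have h := hmono i t ∅ S (Finset.empty_subset S)
    rwa [hnorm i t] at h
  set C : ℝ := ∑ i : Fin n, ∑ t : V i, v i t Finset.univ with hCdef
  have hC0 : 0 ≤ C :=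
    Finset.sum_nonneg fun i _ => Finset.sum_nonneg fun t _ => hv0 i t _
  have hvC : ∀ i t S, v i t S ≤ C := by
    intro i t S
    calc v i t S ≤ v i t Finset.univ := hmono i t S _ (Finset.subset_univ S)
      _ ≤ ∑ t' : V i, v i t' Finset.univ :=
          Finset.single_le_sum (fun t' _ => hv0 i t' _) (Finset.mem_univ t)
      _ ≤ C := Finset.single_le_sum
          (f := fun i' : Fin n => ∑ t' : V i', v i' t' Finset.univ)
          (fun i' _ => Finset.sum_nonneg fun t' _ => hv0 i' t' _) (Finset.mem_univ i)
  have hp0 : ∀ t : ∀ i, V i, 0 ≤ ∏ i, D i (t i) :=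
    fun t => Finset.prod_nonneg fun i _ => hD0 i (t i)
  have hp1 : ∑ t : ∀ i, V i, ∏ i, D i (t i) = 1 := by
    rw [← Fintype.prod_sum]
    simp [hD1]
  -- bound on the inner payoff for fixed types
  have hXbd : ∀ (u : Fin n → Finset M → ℝ) (vv : Fin n → Finset M → ℝ),
      (∀ i S, 0 ≤ u i S) → (∀ i, ∑ S : Finset M, u i S ≤ 1) →
      (∀ i S, 0 ≤ vv i S) → (∀ i S, vv i S ≤ C) →
      ∀ T : Finset M, 0 ≤ (∑ i : Fin n, ∑ S : Finset M, u i S * vv i (S \ T)) ∧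
        (∑ i : Fin n, ∑ S : Finset M, u i S * vv i (S \ T)) ≤ (n : ℝ) * C := by
    intro u vv hu0 hu1 hvv0 hvvC T
    constructor
    · exact Finset.sum_nonneg fun i _ => Finset.sum_nonneg fun S _ =>
        mul_nonneg (hu0 i S) (hvv0 i _)
    · calc (∑ i : Fin n, ∑ S : Finset M, u i S * vv i (S \ T))
          ≤ ∑ _i : Fin n, C := by
            refine Finset.sum_le_sum fun i _ => ?_
            calc ∑ S : Finset M, u i S * vv i (S \ T)
                ≤ ∑ S : Finset M, u i S * C :=
                  Finset.sum_le_sum fun S _ =>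
                    mul_le_mul_of_nonneg_left (hvvC i _) (hu0 i S)
              _ = (∑ S : Finset M, u i S) * C := by rw [Finset.sum_mul]
              _ ≤ 1 * C := mul_le_mul_of_nonneg_right (hu1 i) hC0
              _ = C := one_mul C
      _ = (n : ℝ) * C := by
            simp [Finset.sum_const, Finset.card_univ, nsmul_eq_mul]
  rw [ge_iff_le]
  refine le_of_forall_sub_le fun ε hε => ?_
  -- near-optimal strategies for each type profile
  have hzero : ∀ t : ∀ i, V i, (0 : ℝ) ∈ { w : ℝ | ∃ lam : Fin n → Finset M → ℝ,
      (∀ i, ∀ S : Finset M, 0 ≤ lam i S) ∧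
      (∀ i, ∑ S : Finset M, lam i S ≤ 1) ∧
      (∀ j : M, ∑ i : Fin n,
        ∑ S ∈ Finset.univ.filter (fun S : Finset M => j ∈ S), lam i S ≤ q) ∧
      w = sInf { z : ℝ | ∃ mu : Finset M → ℝ,
        (∀ T : Finset M, 0 ≤ mu T) ∧
        (∑ T : Finset M, mu T = 1) ∧
        (∀ j : M, ∑ T ∈ Finset.univ.filter (fun T : Finset M => j ∈ T), mu T ≤ q) ∧
        z = ∑ T : Finset M, mu T *
              ∑ i : Fin n, ∑ S : Finset M, lam i S * v i (t i) (S \ T) } } := by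
    intro t
    refine ⟨fun _ _ => 0, fun _ _ => le_rfl, by simp, by simp [hq0], ?_⟩
    refine (le_antisymm ?_ ?_).symm
    · refine csInf_le ⟨0, ?_⟩ ?_
      · rintro z ⟨mu, -, -, -, rfl⟩
        simp
      · exact ⟨muZero M, muZero_nonneg, muZero_sum, muZero_col hq0, by simp⟩
    · refine le_csInf ⟨0, muZero M, muZero_nonneg, muZero_sum, muZero_col hq0, by simp⟩ ?_
      rintro z ⟨mu, -, -, -, rfl⟩
      simp
  have hex : ∀ t : ∀ i, V i, ∃ wt : ℝ, wt ∈ { w : ℝ | ∃ lam : Fin n → Finset M → ℝ,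
      (∀ i, ∀ S : Finset M, 0 ≤ lam i S) ∧
      (∀ i, ∑ S : Finset M, lam i S ≤ 1) ∧
      (∀ j : M, ∑ i : Fin n,
        ∑ S ∈ Finset.univ.filter (fun S : Finset M => j ∈ S), lam i S ≤ q) ∧
      w = sInf { z : ℝ | ∃ mu : Finset M → ℝ,
        (∀ T : Finset M, 0 ≤ mu T) ∧
        (∑ T : Finset M, mu T = 1) ∧
        (∀ j : M, ∑ T ∈ Finset.univ.filter (fun T : Finset M => j ∈ T), mu T ≤ q) ∧
        z = ∑ T : Finset M, mu T *
              ∑ i : Fin n, ∑ S : Finset M, lam i S * v i (t i) (S \ T) } } ∧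
      gv (fun i => v i (t i)) q - ε < wt := by
    intro t
    have hlt : gv (fun i => v i (t i)) q - ε < gv (fun i => v i (t i)) q := by linarith
    exact exists_lt_of_lt_csSup ⟨0, hzero t⟩ hlt
  choose w hwA hwgt using hex
  simp only [Set.mem_setOf_eq] at hwA
  choose lam hl0 hl1 hlc hwe using hwA
  -- the combined Bayesian strategy
  set Lam : Fin n → (∀ i, V i) → Finset M → ℝ := fun i t S => lam t i S with hLamdef
  -- the Bayesian inner value for Lam
  set wB : ℝ := sInf { z : ℝ | ∃ mu : Finset M → ℝ,
      (∀ T : Finset M, 0 ≤ mu T) ∧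
      (∑ T : Finset M, mu T = 1) ∧
      (∀ j : M, ∑ T ∈ Finset.univ.filter (fun T : Finset M => j ∈ T), mu T ≤ q) ∧
      z = ∑ T : Finset M, mu T *
            Expect D (fun t => ∑ i : Fin n, ∑ S : Finset M,
              Lam i t S * v i (t i) (S \ T)) } with hwBdef
  -- wB belongs to the Bayesian feasible set
  have hmemB : wB ∈ { w : ℝ | ∃ lam : Fin n → (∀ i, V i) → Finset M → ℝ,
      (∀ i t, ∀ S : Finset M, 0 ≤ lam i t S) ∧
      (∀ i t, ∑ S : Finset M, lam i t S ≤ 1) ∧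
      (∀ j : M,
        Expect D (fun t => ∑ i : Fin n,
          ∑ S ∈ Finset.univ.filter (fun S : Finset M => j ∈ S), lam i t S) ≤ q) ∧
      w = sInf { z : ℝ | ∃ mu : Finset M → ℝ,
        (∀ T : Finset M, 0 ≤ mu T) ∧
        (∑ T : Finset M, mu T = 1) ∧
        (∀ j : M,
          ∑ T ∈ Finset.univ.filter (fun T : Finset M => j ∈ T), mu T ≤ q) ∧
        z = ∑ T : Finset M, mu T *
              Expect D (fun t => ∑ i : Fin n, ∑ S : Finset M,
                lam i t S * v i (t i) (S \ T)) } } := by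
    refine ⟨Lam, fun i t S => hl0 t i S, fun i t => hl1 t i, ?_, hwBdef⟩
    intro j
    unfold Expect
    calc ∑ t : ∀ i, V i, (∏ i, D i (t i)) *
          (∑ i : Fin n, ∑ S ∈ Finset.univ.filter (fun S : Finset M => j ∈ S), Lam i t S)
        ≤ ∑ t : ∀ i, V i, (∏ i, D i (t i)) * q := by
          refine Finset.sum_le_sum fun t _ => ?_
          exact mul_le_mul_of_nonneg_left (hlc t j) (hp0 t)
      _ = q := by rw [← Finset.sum_mul, hp1, one_mul]
  -- the Bayesian LHS set is bounded above by n * C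
  have hbddB : BddAbove { w : ℝ | ∃ lam : Fin n → (∀ i, V i) → Finset M → ℝ,
      (∀ i t, ∀ S : Finset M, 0 ≤ lam i t S) ∧
      (∀ i t, ∑ S : Finset M, lam i t S ≤ 1) ∧
      (∀ j : M,
        Expect D (fun t => ∑ i : Fin n,
          ∑ S ∈ Finset.univ.filter (fun S : Finset M => j ∈ S), lam i t S) ≤ q) ∧
      w = sInf { z : ℝ | ∃ mu : Finset M → ℝ,
        (∀ T : Finset M, 0 ≤ mu T) ∧
        (∑ T : Finset M, mu T = 1) ∧
        (∀ j : M,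
          ∑ T ∈ Finset.univ.filter (fun T : Finset M => j ∈ T), mu T ≤ q) ∧
        z = ∑ T : Finset M, mu T *
              Expect D (fun t => ∑ i : Fin n, ∑ S : Finset M,
                lam i t S * v i (t i) (S \ T)) } } := by
    refine ⟨(n : ℝ) * C, ?_⟩
    rintro w ⟨lm, hlm0, hlm1, -, rfl⟩
    have hE : ∀ T : Finset M,
        0 ≤ Expect D (fun t => ∑ i : Fin n, ∑ S : Finset M,
            lm i t S * v i (t i) (S \ T)) ∧
        Expect D (fun t => ∑ i : Fin n, ∑ S : Finset M,
            lm i t S * v i (t i) (S \ T)) ≤ (n : ℝ) * C := by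
      intro T
      have hb : ∀ t : ∀ i, V i,
          0 ≤ (∑ i : Fin n, ∑ S : Finset M, lm i t S * v i (t i) (S \ T)) ∧
          (∑ i : Fin n, ∑ S : Finset M, lm i t S * v i (t i) (S \ T)) ≤ (n : ℝ) * C :=
        fun t => hXbd (fun i S => lm i t S) (fun i S => v i (t i) S)
          (fun i S => hlm0 i t S) (fun i => hlm1 i t)
          (fun i S => hv0 i (t i) S) (fun i S => hvC i (t i) S) T
      unfold Expect
      constructor
      · exact Finset.sum_nonneg fun t _ => mul_nonneg (hp0 t) (hb t).1
      · calc ∑ t : ∀ i, V i, (∏ i, D i (t i)) *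
              (∑ i : Fin n, ∑ S : Finset M, lm i t S * v i (t i) (S \ T))
            ≤ ∑ t : ∀ i, V i, (∏ i, D i (t i)) * ((n : ℝ) * C) :=
              Finset.sum_le_sum fun t _ =>
                mul_le_mul_of_nonneg_left (hb t).2 (hp0 t)
          _ = (n : ℝ) * C := by rw [← Finset.sum_mul, hp1, one_mul]
    have hne : Set.Nonempty { z : ℝ | ∃ mu : Finset M → ℝ,
        (∀ T : Finset M, 0 ≤ mu T) ∧
        (∑ T : Finset M, mu T = 1) ∧
        (∀ j : M,
          ∑ T ∈ Finset.univ.filter (fun T : Finset M => j ∈ T), mu T ≤ q) ∧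
        z = ∑ T : Finset M, mu T *
              Expect D (fun t => ∑ i : Fin n, ∑ S : Finset M,
                lm i t S * v i (t i) (S \ T)) } :=
      ⟨_, muZero M, muZero_nonneg, muZero_sum, muZero_col hq0, rfl⟩
    have hbd : ∀ z ∈ { z : ℝ | ∃ mu : Finset M → ℝ,
        (∀ T : Finset M, 0 ≤ mu T) ∧
        (∑ T : Finset M, mu T = 1) ∧
        (∀ j : M,
          ∑ T ∈ Finset.univ.filter (fun T : Finset M => j ∈ T), mu T ≤ q) ∧
        z = ∑ T : Finset M, mu T *
              Expect D (fun t => ∑ i : Fin n, ∑ S : Finset M,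
                lm i t S * v i (t i) (S \ T)) }, z ≤ (n : ℝ) * C := by
      rintro z ⟨mu, hmu0, hmu1, -, rfl⟩
      calc ∑ T : Finset M, mu T *
            Expect D (fun t => ∑ i : Fin n, ∑ S : Finset M,
              lm i t S * v i (t i) (S \ T))
          ≤ ∑ T : Finset M, mu T * ((n : ℝ) * C) :=
            Finset.sum_le_sum fun T _ =>
              mul_le_mul_of_nonneg_left (hE T).2 (hmu0 T)
        _ = (n : ℝ) * C := by rw [← Finset.sum_mul, hmu1, one_mul]
    obtain ⟨z0, hz0⟩ := hne
    exact le_trans (csInf_le ⟨0, by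
      rintro z ⟨mu, hmu0, -, -, rfl⟩
      exact Finset.sum_nonneg fun T _ => mul_nonneg (hmu0 T) (hE T).1⟩ hz0) (hbd z0 hz0)
  -- key inequality: the expected per-profile values lower-bound wB
  have hkey : (∑ t : ∀ i, V i, (∏ i, D i (t i)) * w t) ≤ wB := by
    rw [hwBdef]
    refine le_csInf ⟨_, muZero M, muZero_nonneg, muZero_sum, muZero_col hq0, rfl⟩ ?_
    rintro z ⟨mu, hmu0, hmu1, hmuc, rfl⟩
    have hswap : ∑ T : Finset M, mu T *
          Expect D (fun t => ∑ i : Fin n, ∑ S : Finset M,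
            Lam i t S * v i (t i) (S \ T))
        = ∑ t : ∀ i, V i, (∏ i, D i (t i)) *
            ∑ T : Finset M, mu T *
              ∑ i : Fin n, ∑ S : Finset M, lam t i S * v i (t i) (S \ T) := by
      unfold Expect
      have h1 : ∀ T : Finset M, mu T * ∑ t : ∀ i, V i, (∏ i, D i (t i)) *
            (∑ i : Fin n, ∑ S : Finset M, Lam i t S * v i (t i) (S \ T))
          = ∑ t : ∀ i, V i, (∏ i, D i (t i)) *
              (mu T * ∑ i : Fin n, ∑ S : Finset M, lam t i S * v i (t i) (S \ T)) := by
        intro T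
        rw [Finset.mul_sum]
        refine Finset.sum_congr rfl fun t _ => ?_
        simp only [hLamdef]
        ring
      calc ∑ T : Finset M, mu T * ∑ t : ∀ i, V i, (∏ i, D i (t i)) *
            (∑ i : Fin n, ∑ S : Finset M, Lam i t S * v i (t i) (S \ T))
          = ∑ T : Finset M, ∑ t : ∀ i, V i, (∏ i, D i (t i)) *
              (mu T * ∑ i : Fin n, ∑ S : Finset M, lam t i S * v i (t i) (S \ T)) :=
            Finset.sum_congr rfl fun T _ => h1 T
        _ = ∑ t : ∀ i, V i, ∑ T : Finset M, (∏ i, D i (t i)) *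
              (mu T * ∑ i : Fin n, ∑ S : Finset M, lam t i S * v i (t i) (S \ T)) :=
            Finset.sum_comm
        _ = ∑ t : ∀ i, V i, (∏ i, D i (t i)) *
              ∑ T : Finset M, mu T *
                ∑ i : Fin n, ∑ S : Finset M, lam t i S * v i (t i) (S \ T) :=
            Finset.sum_congr rfl fun t _ => (Finset.mul_sum _ _ _).symm
    rw [hswap]
    refine Finset.sum_le_sum fun t _ => ?_
    refine mul_le_mul_of_nonneg_left ?_ (hp0 t)
    -- w t ≤ the inner payoff against mu
    have hmem : (∑ T : Finset M, mu T *
        ∑ i : Fin n, ∑ S : Finset M, lam t i S * v i (t i) (S \ T)) ∈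
        { z : ℝ | ∃ mu' : Finset M → ℝ,
          (∀ T : Finset M, 0 ≤ mu' T) ∧
          (∑ T : Finset M, mu' T = 1) ∧
          (∀ j : M, ∑ T ∈ Finset.univ.filter (fun T : Finset M => j ∈ T), mu' T ≤ q) ∧
          z = ∑ T : Finset M, mu' T *
                ∑ i : Fin n, ∑ S : Finset M, lam t i S * v i (t i) (S \ T) } :=
      ⟨mu, hmu0, hmu1, hmuc, rfl⟩
    rw [hwe t]
    refine csInf_le ⟨0, ?_⟩ hmem
    rintro z ⟨mu', hmu'0, -, -, rfl⟩
    refine Finset.sum_nonneg fun T _ => mul_nonneg (hmu'0 T) ?_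
    exact (hXbd (fun i S => lam t i S) (fun i S => v i (t i) S)
      (fun i S => hl0 t i S) (fun i => hl1 t i)
      (fun i S => hv0 i (t i) S) (fun i S => hvC i (t i) S) T).1
  -- final chaining
  have hfin : Expect D (fun t => gv (fun i => v i (t i)) q) - ε
      ≤ ∑ t : ∀ i, V i, (∏ i, D i (t i)) * w t := by
    unfold Expect
    have h1 : ∑ t : ∀ i, V i, (∏ i, D i (t i)) * gv (fun i => v i (t i)) q
        ≤ ∑ t : ∀ i, V i, (∏ i, D i (t i)) * (w t + ε) := by
      refine Finset.sum_le_sum fun t _ => ?_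
      refine mul_le_mul_of_nonneg_left ?_ (hp0 t)
      linarith [hwgt t]
    have h2 : ∑ t : ∀ i, V i, (∏ i, D i (t i)) * (w t + ε)
        = (∑ t : ∀ i, V i, (∏ i, D i (t i)) * w t) + ε := by
      have h3 : ∀ t : ∀ i, V i, (∏ i, D i (t i)) * (w t + ε)
          = (∏ i, D i (t i)) * w t + (∏ i, D i (t i)) * ε := fun t => by ring
      rw [Finset.sum_congr rfl fun t _ => h3 t, Finset.sum_add_distrib,
        ← Finset.sum_mul, hp1, one_mul]
    linarith [h1, h2.le]
  calc Expect D (fun t => gv (fun i => v i (t i)) q) - ε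
      ≤ ∑ t : ∀ i, V i, (∏ i, D i (t i)) * w t := hfin
    _ ≤ wB := hkey
    _ ≤ sSup _ := le_csSup hbddB hmemB
end
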